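/- arXiv:2508.20809 — 4 statements merged into one kernel-verified Lean document; each statement's English description precedes it below -/
import Mathlib

section
/- Suppose ρ₁ = ρ₂ = ρ and ρ⁻¹ = (t/s)^{1/r} for some positive integers s, t, r with gcd(s, t) = 1. If c ≠ κ·ρ⁻¹ for every κ ∈ ℚ, then every orthogonal set of exponentials for μ_{M,D} contains at most p elements, and this bound is attained: there exists an orthogonal set of exponentials for μ_{M,D} with exactly p elements. -/
open MeasureTheory Complex Matrix
open scoped ENNReal

noncomputable section

/-- The exponential function `e_λ(x) = e^{-2πi⟨λ,x⟩}` on `ℝ²`. -/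
def expChar (lam x : Fin 2 → ℝ) : ℂ :=
  Complex.exp ((-2 * Real.pi * Complex.I) * ((lam 0 * x 0 + lam 1 * x 1 : ℝ) : ℂ))

/-- The Fourier transform `μ̂(ξ) = ∫ e^{-2πi⟨ξ,x⟩} dμ(x)` of a measure on `ℝ²`. -/
def ftMeasure (μ : Measure (Fin 2 → ℝ)) (ξ : Fin 2 → ℝ) : ℂ :=
  ∫ x, expChar ξ x ∂μ

/-- The mask `m_D(ξ) = (1/p) Σ_{d∈D} e^{-2πi⟨ξ,d⟩}` of a digit system `D : Fin p → ℝ²`. -/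
def mask {p : ℕ} (D : Fin p → (Fin 2 → ℝ)) (ξ : Fin 2 → ℝ) : ℂ :=
  (p : ℂ)⁻¹ * ∑ i : Fin p, expChar ξ (D i)

/-- Integer digits, coerced to real vectors. -/
def digitR {p : ℕ} (D : Fin p → (Fin 2 → ℤ)) : Fin p → (Fin 2 → ℝ) :=
  fun i j => (D i j : ℝ)

/-- `μ` is the self-affine measure of the IFS `φ_d(x) = M⁻¹(x+d)`, `d ∈ D`:
a compactly supported Borel probability measure with `μ = (1/#D) Σ_d μ ∘ φ_d⁻¹`. -/
def IsSelfAffine {p : ℕ} (μ : Measure (Fin 2 → ℝ)) (M : Matrix (Fin 2) (Fin 2) ℝ)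
    (D : Fin p → (Fin 2 → ℝ)) : Prop :=
  IsProbabilityMeasure μ ∧ (∃ K : Set (Fin 2 → ℝ), IsCompact K ∧ μ Kᶜ = 0) ∧
  μ = (p : ℝ≥0∞)⁻¹ • ∑ i : Fin p, μ.map (fun x => M⁻¹.mulVec (x + D i))

/-- `Λ` is an orthogonal set of exponentials for `μ`. -/
def IsOrthoSet (μ : Measure (Fin 2 → ℝ)) (Λ : Set (Fin 2 → ℝ)) : Prop :=
  ∀ l ∈ Λ, ∀ l' ∈ Λ, l ≠ l' → ftMeasure μ (l - l') = 0

/-- `μ` is a spectral measure: some countable set of exponentials forms an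
orthonormal (Hilbert) basis of `L²(μ)`. -/
def IsSpectral (μ : Measure (Fin 2 → ℝ)) : Prop :=
  ∃ Λ : Set (Fin 2 → ℝ), Λ.Countable ∧
    ∃ b : HilbertBasis Λ ℂ (Lp ℂ 2 μ),
      ∀ lam : Λ, ⇑(b lam) =ᵐ[μ] expChar (lam : Fin 2 → ℝ)

/-- The standing assumption on the digit set: `a = (a₁,a₂)` has entries in `[1,p-1]`
and `Z(m_D) = ⋃_{j=1}^{p-1} (j·a/p + ℤ²)`. -/
def ZeroSetCond (p : ℕ) (D : Fin p → (Fin 2 → ℤ)) (a : Fin 2 → ℤ) : Prop :=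
  (∀ i, 1 ≤ a i ∧ a i ≤ (p : ℤ) - 1) ∧
  ∀ ξ : Fin 2 → ℝ, mask (digitR D) ξ = 0 ↔
    ∃ j : ℕ, 1 ≤ j ∧ j ≤ p - 1 ∧ ∃ k : Fin 2 → ℤ,
      ∀ i, ξ i = (j : ℝ) * (a i : ℝ) / p + (k i : ℝ)

/-- The upper-triangular expanding matrix `M = [[ρ₁⁻¹, c],[0, ρ₂⁻¹]]`. -/
def Mupper (ρ₁ ρ₂ c : ℝ) : Matrix (Fin 2) (Fin 2) ℝ := !![ρ₁⁻¹, c; 0, ρ₂⁻¹]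

/-- The set `E_a = {h/l : gcd(h,l)=1, l·a₂ − h·a₁ ∈ ℤ∖pℤ} ∪ {0}`. -/
def Ea (p : ℕ) (a : Fin 2 → ℤ) : Set ℝ :=
  {x | ∃ h l : ℤ, Int.gcd h l = 1 ∧ ¬ ((p : ℤ) ∣ (l * a 1 - h * a 0)) ∧
    x = (h : ℝ) / (l : ℝ)} ∪ {0}


namespace Stmt1Aux

lemma expChar_norm (l x : Fin 2 → ℝ) : ‖expChar l x‖ = 1 := by
  rw [expChar, Complex.norm_exp]
  convert Real.exp_zero using 2
  simp [Complex.mul_re]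

lemma expChar_cont_x (l : Fin 2 → ℝ) : Continuous (expChar l) := by
  apply Complex.continuous_exp.comp
  apply Continuous.mul continuous_const
  exact Complex.continuous_ofReal.comp
    (((continuous_const.mul (continuous_apply 0)).add
      (continuous_const.mul (continuous_apply 1))))

lemma expChar_cont_l (x : Fin 2 → ℝ) : Continuous fun l => expChar l x := by
  apply Complex.continuous_exp.comp
  apply Continuous.mul continuous_const
  exact Complex.continuous_ofReal.comp
    ((((continuous_apply 0).mul continuous_const).add
      ((continuous_apply 1).mul continuous_const)))

lemma expChar_zero (x : Fin 2 → ℝ) : expChar 0 x = 1 := by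
  simp [expChar]

lemma expChar_integrable (μ : Measure (Fin 2 → ℝ)) [IsFiniteMeasure μ] (l : Fin 2 → ℝ) :
    Integrable (expChar l) μ :=
  (integrable_const (1 : ℝ)).mono' (expChar_cont_x l).aestronglyMeasurable
    (Filter.Eventually.of_forall fun x => (expChar_norm l x).le)

lemma ftMeasure_zero (μ : Measure (Fin 2 → ℝ)) [IsProbabilityMeasure μ] :
    ftMeasure μ 0 = 1 := by
  rw [ftMeasure]
  simp [expChar_zero]


lemma mulVec_cont (A : Matrix (Fin 2) (Fin 2) ℝ) :
    Continuous (fun z : Fin 2 → ℝ => A.mulVec z) := by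
  apply continuous_pi
  intro j
  simp only [Matrix.mulVec, dotProduct, Fin.sum_univ_two]
  exact (continuous_const.mul (continuous_apply 0)).add
    (continuous_const.mul (continuous_apply 1))

lemma feq {p : ℕ} (ρ c : ℝ) (hρ : ρ ≠ 0) (Dr : Fin p → (Fin 2 → ℝ))
    (μ : Measure (Fin 2 → ℝ)) [IsProbabilityMeasure μ]
    (heq : μ = (p : ℝ≥0∞)⁻¹ •
      ∑ i : Fin p, μ.map (fun x => (Mupper ρ ρ c)⁻¹.mulVec (x + Dr i)))
    (v : Fin 2 → ℝ) :
    ftMeasure μ ![ρ⁻¹ * v 0, c * v 0 + ρ⁻¹ * v 1] = mask Dr v * ftMeasure μ v := by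
  set M := Mupper ρ ρ c with hM
  set Tv : Fin 2 → ℝ := ![ρ⁻¹ * v 0, c * v 0 + ρ⁻¹ * v 1] with hTv
  have hdet : M.det ≠ 0 := by
    rw [hM, Mupper, Matrix.det_fin_two_of]
    simp [hρ]
  have hMg : ∀ y : Fin 2 → ℝ, M.mulVec (M⁻¹.mulVec y) = y := by
    intro y
    rw [Matrix.mulVec_mulVec, Matrix.mul_nonsing_inv _ (Ne.isUnit hdet), Matrix.one_mulVec]
  have hdot0 : ∀ y : Fin 2 → ℝ,
      Tv 0 * y 0 + Tv 1 * y 1 = v 0 * (M.mulVec y) 0 + v 1 * (M.mulVec y) 1 := by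
    intro y
    rw [hM]
    simp [Mupper, Matrix.mulVec, dotProduct, Fin.sum_univ_two, hTv]
    ring
  have hdot : ∀ w : Fin 2 → ℝ,
      Tv 0 * (M⁻¹.mulVec w) 0 + Tv 1 * (M⁻¹.mulVec w) 1 = v 0 * w 0 + v 1 * w 1 := by
    intro w
    rw [hdot0 (M⁻¹.mulVec w), hMg w]
  have hpt : ∀ (i : Fin p) (x : Fin 2 → ℝ),
      expChar Tv (M⁻¹.mulVec (x + Dr i)) = expChar v (Dr i) * expChar v x := by
    intro i x
    rw [expChar, expChar, expChar, ← Complex.exp_add]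
    congr 1
    rw [hdot (x + Dr i)]
    have : ((x + Dr i) 0 : ℝ) = x 0 + Dr i 0 := rfl
    push_cast
    simp only [Pi.add_apply]
    push_cast
    ring
  have hcont : ∀ i : Fin p, Continuous (fun x : Fin 2 → ℝ => M⁻¹.mulVec (x + Dr i)) :=
    fun i => (mulVec_cont M⁻¹).comp (continuous_id.add continuous_const)
  have hmeas : ∀ i : Fin p, AEMeasurable (fun x : Fin 2 → ℝ => M⁻¹.mulVec (x + Dr i)) μ :=
    fun i => (hcont i).measurable.aemeasurable
  haveI hPmap : ∀ i : Fin p, IsProbabilityMeasure (μ.map (fun x => M⁻¹.mulVec (x + Dr i))) :=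
    fun i => Measure.isProbabilityMeasure_map (hmeas i)
  have step1 : ftMeasure μ Tv
      = (p : ℝ)⁻¹ • ∑ i : Fin p, ∫ x, expChar Tv x ∂(μ.map (fun x => M⁻¹.mulVec (x + Dr i))) := by
    rw [ftMeasure]
    conv_lhs => rw [heq]
    rw [integral_smul_measure, integral_finset_sum_measure (fun i _ => expChar_integrable _ _)]
    congr 1
    rw [ENNReal.toReal_inv]
    simp
  have step2 : ∀ i : Fin p,
      ∫ x, expChar Tv x ∂(μ.map (fun x => M⁻¹.mulVec (x + Dr i)))
        = expChar v (Dr i) * ftMeasure μ v := by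
    intro i
    rw [integral_map (hmeas i) (expChar_cont_x Tv).aestronglyMeasurable]
    simp_rw [hpt i]
    rw [MeasureTheory.integral_const_mul]
    rfl
  rw [step1]
  simp_rw [step2]
  rw [← Finset.sum_mul, mask]
  rw [Complex.real_smul]
  push_cast
  ring


lemma exists_mask_zero {p : ℕ} (ρ c : ℝ) (hρ0 : 0 < ρ) (hρ1 : ρ < 1)
    (Dr : Fin p → (Fin 2 → ℝ)) (μ : Measure (Fin 2 → ℝ)) [IsProbabilityMeasure μ]
    (heq : μ = (p : ℝ≥0∞)⁻¹ •
      ∑ i : Fin p, μ.map (fun x => (Mupper ρ ρ c)⁻¹.mulVec (x + Dr i)))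
    (ξ : Fin 2 → ℝ) (hξ : ftMeasure μ ξ = 0) :
    ∃ n : ℕ, 1 ≤ n ∧
      mask Dr ![ρ^n * ξ 0, -(n:ℝ) * c * ρ^(n+1) * ξ 0 + ρ^n * ξ 1] = 0 := by
  have hρ : ρ ≠ 0 := ne_of_gt hρ0
  set w : ℕ → Fin 2 → ℝ :=
    fun n => ![ρ^n * ξ 0, -(n:ℝ) * c * ρ^(n+1) * ξ 0 + ρ^n * ξ 1] with hw
  have hw0 : w 0 = ξ := by
    funext i
    fin_cases i <;> simp [hw]
  have hTw : ∀ n : ℕ, ![ρ⁻¹ * (w (n+1)) 0, c * (w (n+1)) 0 + ρ⁻¹ * (w (n+1)) 1] = w n := by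
    intro n
    funext i
    fin_cases i <;>
      · simp only [hw, Matrix.cons_val_zero, Matrix.cons_val_one, Matrix.head_cons]
        push_cast
        field_simp
        ring
  have hrec : ∀ n : ℕ, ftMeasure μ (w n) = mask Dr (w (n+1)) * ftMeasure μ (w (n+1)) := by
    intro n
    rw [← hTw n]
    exact feq ρ c hρ Dr μ heq (w (n+1))
  by_contra hcon
  push_neg at hcon
  have hmask : ∀ n : ℕ, 1 ≤ n → mask Dr (w n) ≠ 0 := by
    intro n hn
    obtain ⟨m, rfl⟩ := Nat.exists_eq_add_of_le hn
    exact hcon (1 + m) (by omega)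
  have hzero : ∀ n : ℕ, ftMeasure μ (w n) = 0 := by
    intro n
    induction n with
    | zero => rw [hw0]; exact hξ
    | succ k ih =>
      have := hrec k
      rw [ih] at this
      rcases mul_eq_zero.mp this.symm with h | h
      · exact absurd h (hmask (k+1) (by omega))
      · exact h
  -- tendsto 1
  have hwlim : Filter.Tendsto w Filter.atTop (nhds (0 : Fin 2 → ℝ)) := by
    rw [tendsto_pi_nhds]
    intro i
    have hpow : Filter.Tendsto (fun n : ℕ => ρ^n) Filter.atTop (nhds 0) :=
      tendsto_pow_atTop_nhds_zero_of_lt_one hρ0.le hρ1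
    have hnpow : Filter.Tendsto (fun n : ℕ => (n:ℝ) * ρ^n) Filter.atTop (nhds 0) := by
      have hs : Summable (fun n : ℕ => (n:ℝ)^1 * ρ^n) :=
        summable_pow_mul_geometric_of_norm_lt_one 1 (by rwa [Real.norm_eq_abs, abs_of_pos hρ0])
      simpa using hs.tendsto_atTop_zero
    fin_cases i
    · simp only [hw, Matrix.cons_val_zero, Pi.zero_apply]
      simpa using hpow.mul_const (ξ 0)
    · simp only [hw, Matrix.cons_val_one, Matrix.head_cons, Pi.zero_apply]
      have h1 : Filter.Tendsto (fun n : ℕ => -(n:ℝ) * c * ρ^(n+1) * ξ 0)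
          Filter.atTop (nhds 0) := by
        have := (hnpow.mul_const (-c * ρ * ξ 0))
        simp only [zero_mul] at this
        apply this.congr
        intro n
        rw [pow_succ]
        ring
      have h2 := hpow.mul_const (ξ 1)
      simp only [zero_mul] at h2
      simpa using h1.add h2
  have hftlim : Filter.Tendsto (fun n => ftMeasure μ (w n)) Filter.atTop (nhds 1) := by
    have := MeasureTheory.tendsto_integral_of_dominated_convergence
      (F := fun n x => expChar (w n) x) (f := fun _ => (1:ℂ)) (bound := fun _ => (1:ℝ))
      (μ := μ)
      (fun n => (expChar_cont_x (w n)).aestronglyMeasurable)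
      (integrable_const 1)
      (fun n => Filter.Eventually.of_forall fun x => (expChar_norm (w n) x).le)
      (Filter.Eventually.of_forall fun x => by
        have hcont := (expChar_cont_l x).tendsto (0 : Fin 2 → ℝ)
        have := hcont.comp hwlim
        rwa [expChar_zero x] at this)
    simpa [ftMeasure] using this
  have : (0:ℂ) = 1 := by
    apply tendsto_nhds_unique _ hftlim
    simp only [hzero]
    exact tendsto_const_nhds
  exact zero_ne_one this


lemma not_dvd_combo (p : ℕ) (hp : p.Prime) (j : ℕ) (hj1 : 1 ≤ j) (hj2 : j ≤ p - 1)
    (b k : ℤ) (hb1 : 1 ≤ b) (hb2 : b ≤ (p:ℤ) - 1) :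
    ¬ (p:ℤ) ∣ ((j:ℤ) * b + p * k) := by
  intro hdvd
  have hjb : (p:ℤ) ∣ (j:ℤ) * b := by
    have : (j:ℤ) * b = ((j:ℤ) * b + p * k) - p * k := by ring
    rw [this]
    exact dvd_sub hdvd ⟨k, rfl⟩
  have hpZ : Prime (p:ℤ) := Int.prime_iff_natAbs_prime.mpr (by simpa using hp)
  have hp2 := hp.two_le
  rcases hpZ.dvd_mul.mp hjb with h | h
  · have : p ∣ j := Int.ofNat_dvd.mp h
    have := Nat.le_of_dvd (by omega) this
    omega
  · have := Int.le_of_dvd (by omega) h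
    omega

lemma diff_data (p : ℕ) (hp : p.Prime) (ρ c : ℝ) (hρ0 : 0 < ρ) (hρ1 : ρ < 1)
    (D : Fin p → (Fin 2 → ℤ)) (a : Fin 2 → ℤ) (hZ : ZeroSetCond p D a)
    (μ : Measure (Fin 2 → ℝ)) [IsProbabilityMeasure μ]
    (heq : μ = (p : ℝ≥0∞)⁻¹ •
      ∑ i : Fin p, μ.map (fun x => (Mupper ρ ρ c)⁻¹.mulVec (x + digitR D i)))
    (ξ : Fin 2 → ℝ) (hξ : ftMeasure μ ξ = 0) :
    ∃ (n : ℕ) (u v : ℤ), 1 ≤ n ∧ ¬(p:ℤ) ∣ u ∧ ¬(p:ℤ) ∣ v ∧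
      (p:ℝ) * ξ 0 = ρ⁻¹^n * u ∧
      (p:ℝ) * ξ 1 = (n:ℝ) * c * (ρ⁻¹^n * ρ) * u + ρ⁻¹^n * v := by
  have hρ : ρ ≠ 0 := ne_of_gt hρ0
  have hpR : (0:ℝ) < p := by exact_mod_cast hp.pos
  obtain ⟨n, hn1, hmask⟩ := exists_mask_zero ρ c hρ0 hρ1 (digitR D) μ heq ξ hξ
  obtain ⟨j, hj1, hj2, k, hk⟩ := (hZ.2 _).mp hmask
  have hk0 : ρ^n * ξ 0 = (j:ℝ) * (a 0 : ℝ) / p + (k 0 : ℝ) := by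
    have := hk 0
    simpa using this
  have hk1 : -(n:ℝ) * c * ρ^(n+1) * ξ 0 + ρ^n * ξ 1
      = (j:ℝ) * (a 1 : ℝ) / p + (k 1 : ℝ) := by
    have := hk 1
    simpa using this
  refine ⟨n, (j:ℤ) * a 0 + p * k 0, (j:ℤ) * a 1 + p * k 1, hn1,
    not_dvd_combo p hp j hj1 (by have := hp.two_le; omega) _ _ (hZ.1 0).1 (hZ.1 0).2,
    not_dvd_combo p hp j hj1 (by have := hp.two_le; omega) _ _ (hZ.1 1).1 (hZ.1 1).2, ?_, ?_⟩
  all_goals {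
    have hne : ρ^n ≠ 0 := pow_ne_zero n hρ
    have h1 : ρ^n * ((p:ℝ) * ξ 0) = ((j:ℝ) * (a 0:ℤ) + (p:ℝ) * (k 0:ℤ)) := by
      have : ρ^n * ((p:ℝ) * ξ 0) = (ρ^n * ξ 0) * p := by ring
      rw [this, hk0]
      field_simp
    have h2 : -(n:ℝ) * c * ρ^(n+1) * ((p:ℝ) * ξ 0) + ρ^n * ((p:ℝ) * ξ 1)
        = ((j:ℝ) * (a 1:ℤ) + (p:ℝ) * (k 1:ℤ)) := by
      have : -(n:ℝ) * c * ρ^(n+1) * ((p:ℝ) * ξ 0) + ρ^n * ((p:ℝ) * ξ 1)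
          = (-(n:ℝ) * c * ρ^(n+1) * ξ 0 + ρ^n * ξ 1) * p := by ring
      rw [this, hk1]
      field_simp
    push_cast
    rw [inv_pow]
    field_simp
    try linear_combination h1
    try linear_combination h2 + (n:ℝ) * c * ρ * h1
  }


section Alg
open Polynomial IntermediateField

lemma radical_independent (θ : ℝ) (hθ1 : 1 < θ) (r₀ : ℕ) (hr₀ : 0 < r₀) (Q : ℚ)
    (hQ : θ ^ r₀ = (Q : ℝ))
    (hmin : ∀ k, 0 < k → k < r₀ → ∀ q : ℚ, θ ^ k ≠ (q : ℝ)) :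
    ∀ P : ℚ[X], P.natDegree < r₀ → Polynomial.aeval θ P = 0 → P = 0 := by
  have hθ0 : (0:ℝ) < θ := lt_trans one_pos hθ1
  have haev : Polynomial.aeval θ ((X : ℚ[X]) ^ r₀ - C Q) = 0 := by
    rw [map_sub, map_pow, aeval_X, aeval_C, eq_ratCast, hQ, sub_self]
  have hint : IsIntegral ℚ θ := by
    refine ⟨(X : ℚ[X]) ^ r₀ - C Q, monic_X_pow_sub_C Q hr₀.ne', ?_⟩
    rw [← Polynomial.aeval_def]
    exact haev
  set d := (minpoly ℚ θ).natDegree with hd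
  have hdle : d ≤ r₀ := by
    have h1 := Polynomial.natDegree_le_of_dvd (minpoly.dvd ℚ θ haev)
      (X_pow_sub_C_ne_zero hr₀ Q)
    rwa [natDegree_X_pow_sub_C] at h1
  have hdpos : 0 < d := minpoly.natDegree_pos hint
  -- norm argument: θ ^ d is rational
  haveI := IntermediateField.adjoin.finiteDimensional hint
  have hfr : Module.finrank ℚ ℚ⟮θ⟯ = d := IntermediateField.adjoin.finrank hint
  set gen := IntermediateField.AdjoinSimple.gen ℚ θ with hg
  have hgen : gen ^ r₀ = algebraMap ℚ ℚ⟮θ⟯ Q := by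
    apply (algebraMap ℚ⟮θ⟯ ℝ).injective
    rw [map_pow, IntermediateField.AdjoinSimple.algebraMap_gen,
      ← IsScalarTower.algebraMap_apply, eq_ratCast, hQ]
  set β : ℚ := Algebra.norm ℚ gen with hβdef
  have hnorm : β ^ r₀ = Q ^ d := by
    rw [hβdef, ← map_pow, hgen, Algebra.norm_algebraMap, hfr]
  have hkey : θ ^ d = ((|β| : ℚ) : ℝ) := by
    have h1 : (((|β| : ℚ) : ℝ)) ^ r₀ = (θ ^ d) ^ r₀ := by
      push_cast
      rw [← _root_.abs_pow]
      have : ((β : ℝ)) ^ r₀ = ((β ^ r₀ : ℚ) : ℝ) := by push_cast; ring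
      rw [this, hnorm]
      push_cast
      rw [← hQ, ← pow_mul, ← pow_mul, mul_comm]
      exact abs_of_nonneg (by positivity)
    have h2 : (0:ℝ) ≤ ((|β| : ℚ) : ℝ) := by push_cast; exact abs_nonneg _
    have h3 : (0:ℝ) ≤ θ ^ d := by positivity
    exact ((pow_left_strictMonoOn₀ hr₀.ne').injOn h2 h3 h1).symm
  have hdr : d = r₀ := by
    rcases lt_or_eq_of_le hdle with h | h
    · exact absurd hkey (hmin d hdpos h _)
    · exact h
  intro P hPdeg hP0
  by_contra hPne
  have hle := minpoly.degree_le_of_ne_zero ℚ θ hPne hP0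
  have := Polynomial.natDegree_le_natDegree hle
  omega

lemma three_term (θ : ℝ) (hθ1 : 1 < θ) (r₀ : ℕ) (hr₀ : 0 < r₀) (Q : ℚ)
    (hQ : θ ^ r₀ = (Q : ℝ))
    (hmin : ∀ k, 0 < k → k < r₀ → ∀ q : ℚ, θ ^ k ≠ (q : ℝ))
    (e₁ e₂ e₃ : ℕ) (h₁ : e₁ < r₀) (h₂ : e₂ < r₀) (h₃ : e₃ < r₀)
    (q₁ q₂ q₃ : ℚ) (hq₁ : q₁ ≠ 0) (hq₂ : q₂ ≠ 0) (hq₃ : q₃ ≠ 0)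
    (hsum : (q₁:ℝ) * θ^e₁ + (q₂:ℝ) * θ^e₂ + (q₃:ℝ) * θ^e₃ = 0) :
    e₁ = e₂ ∧ e₂ = e₃ := by
  set P : ℚ[X] := C q₁ * X^e₁ + C q₂ * X^e₂ + C q₃ * X^e₃ with hP
  have hPdeg : P.natDegree < r₀ := by
    apply lt_of_le_of_lt (Polynomial.natDegree_add_le _ _)
    simp only [max_lt_iff]
    constructor
    · apply lt_of_le_of_lt (Polynomial.natDegree_add_le _ _)
      simp only [max_lt_iff]
      exact ⟨lt_of_le_of_lt (natDegree_C_mul_le _ _) (by simpa using h₁),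
        lt_of_le_of_lt (natDegree_C_mul_le _ _) (by simpa using h₂)⟩
    · exact lt_of_le_of_lt (natDegree_C_mul_le _ _) (by simpa using h₃)
  have hPa : Polynomial.aeval θ P = 0 := by
    rw [hP]
    simp only [_root_.map_add, _root_.map_mul, map_pow, aeval_X, aeval_C, eq_ratCast]
    exact hsum
  have hP0 : P = 0 := radical_independent θ hθ1 r₀ hr₀ Q hQ hmin P hPdeg hPa
  have hco : ∀ m : ℕ, (if m = e₁ then q₁ else 0) + (if m = e₂ then q₂ else 0)
      + (if m = e₃ then q₃ else 0) = 0 := by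
    intro m
    have := congrArg (fun P : ℚ[X] => P.coeff m) hP0
    simpa [hP, coeff_add, coeff_C_mul, coeff_X_pow] using this
  rcases eq_or_ne e₁ e₂ with h12 | h12
  · rcases eq_or_ne e₂ e₃ with h23 | h23
    · exact ⟨h12, h23⟩
    · exfalso
      have := hco e₃
      rw [if_neg (by omega), if_neg (by omega), if_pos rfl] at this
      simp at this
      exact hq₃ this
  · exfalso
    rcases eq_or_ne e₃ e₁ with h31 | h31
    · have := hco e₂
      rw [if_neg (by omega), if_pos rfl, if_neg (by omega)] at this
      simp at this
      exact hq₂ this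
    · have := hco e₁
      rw [if_pos rfl, if_neg (by omega), if_neg (by omega)] at this
      simp at this
      exact hq₁ this

end Alg

lemma key_int {P : ℤ} (hP : Prime P) {A B C : ℤ} (hA : ¬P ∣ A) (hB : ¬P ∣ B) (hC : ¬P ∣ C)
    {α β γ : ℕ} (hαβ : α ≠ β) (hβγ : β ≠ γ) (hαγ : α ≠ γ)
    (heq : P^α * A + P^β * B = P^γ * C) : False := by
  have hstep : ∀ (a : ℕ) (X : ℤ), P^(a+1) ∣ P^a * X → P ∣ X := by
    intro a X hdvd
    rw [pow_succ] at hdvd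
    exact (mul_dvd_mul_iff_left (pow_ne_zero a hP.ne_zero)).mp hdvd
  have hmono : ∀ (a b : ℕ) (X : ℤ), a < b → P^(a+1) ∣ P^b * X := by
    intro a b X hab
    exact Dvd.dvd.mul_right (pow_dvd_pow P (by omega)) X
  rcases lt_trichotomy α β with hab | hab | hab
  · rcases lt_trichotomy α γ with hag | hag | hag
    · -- α min
      have h1 : P^(α+1) ∣ P^α * A := by
        have : P^α * A = P^γ * C - P^β * B := by linarith
        rw [this]
        exact dvd_sub (hmono _ _ _ hag) (hmono _ _ _ hab)
      exact hA (hstep _ _ h1)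
    · exact hαγ hag
    · -- γ < α < β : γ min
      have h1 : P^(γ+1) ∣ P^γ * C := by
        rw [← heq]
        exact dvd_add (hmono _ _ _ hag) (hmono _ _ _ (lt_trans hag hab))
      exact hC (hstep _ _ h1)
  · exact hαβ hab
  · rcases lt_trichotomy β γ with hbg | hbg | hbg
    · -- β min
      have h1 : P^(β+1) ∣ P^β * B := by
        have : P^β * B = P^γ * C - P^α * A := by linarith
        rw [this]
        exact dvd_sub (hmono _ _ _ hbg) (hmono _ _ _ hab)
      exact hB (hstep _ _ h1)
    · exact hβγ hbg
    · -- γ min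
      have h1 : P^(γ+1) ∣ P^γ * C := by
        rw [← heq]
        exact dvd_add (hmono _ _ _ (lt_trans hbg hab)) (hmono _ _ _ hbg)
      exact hC (hstep _ _ h1)

lemma pigeon (p : ℕ) (hp : p.Prime) (g : Fin (p+1) → ℤ)
    (h : ∀ i j, i ≠ j → ¬ (p:ℤ) ∣ (g i - g j)) : False := by
  haveI : NeZero p := ⟨hp.ne_zero⟩
  have hinj : Function.Injective (fun i => ((g i : ZMod p))) := by
    intro i j hij
    by_contra hne
    apply h i j hne
    have : ((g i - g j : ℤ) : ZMod p) = 0 := by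
      push_cast
      rw [sub_eq_zero]
      exact_mod_cast hij
    exact (ZMod.intCast_zmod_eq_zero_iff_dvd _ _).mp this
  have := Fintype.card_le_of_injective _ hinj
  rw [ZMod.card, Fintype.card_fin] at this
  omega


lemma core (p : ℕ) (hp : p.Prime) (θ c : ℝ) (hθ1 : 1 < θ)
    (hc : ∀ κ : ℚ, c ≠ (κ:ℝ) * θ)
    (hrat : ∃ m : ℕ, 0 < m ∧ ∃ q : ℚ, θ ^ m = (q : ℝ))
    (lam : Fin (p+1) → Fin 2 → ℝ)
    (dat : ∀ i j, i ≠ j → ∃ (nn : ℕ) (uu vv : ℤ), 1 ≤ nn ∧ ¬(p:ℤ) ∣ uu ∧ ¬(p:ℤ) ∣ vv ∧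
      (p:ℝ) * (lam i 0 - lam j 0) = θ^nn * uu ∧
      (p:ℝ) * (lam i 1 - lam j 1) = (nn:ℝ) * c * (θ^nn * θ⁻¹) * uu + θ^nn * vv) :
    False := by
  classical
  have hθ0 : (0:ℝ) < θ := lt_trans one_pos hθ1
  have hθne : θ ≠ 0 := ne_of_gt hθ0
  have hp2 := hp.two_le
  have hpZ : Prime (p:ℤ) := Int.prime_iff_natAbs_prime.mpr (by simpa using hp)
  -- minimal period r₀
  set r₀ := Nat.find hrat with hr₀def
  obtain ⟨hr₀pos, Q, hQ⟩ := Nat.find_spec hrat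
  have hmin : ∀ k, 0 < k → k < r₀ → ∀ q : ℚ, θ ^ k ≠ (q:ℝ) := by
    intro k hk hlt q hqe
    exact Nat.find_min hrat hlt ⟨hk, q, hqe⟩
  have hQR : (1:ℝ) < (Q:ℝ) := by
    rw [← hQ]
    exact one_lt_pow₀ hθ1 hr₀pos.ne'
  have hQ1 : (1:ℚ) < Q := by exact_mod_cast hQR
  have hQpos : (0:ℚ) < Q := lt_trans one_pos hQ1
  have hQ0 : Q ≠ 0 := ne_of_gt hQpos
  -- choose data
  choose! n u v hn1 hu hv h0 h1 using dat
  have hune : ∀ i j, i ≠ j → (u i j : ℚ) ≠ 0 := by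
    intro i j hij
    have : u i j ≠ 0 := fun h => hu i j hij (h ▸ dvd_zero _)
    exact_mod_cast this
  have hvne : ∀ i j, i ≠ j → (v i j : ℚ) ≠ 0 := by
    intro i j hij
    have : v i j ≠ 0 := fun h => hv i j hij (h ▸ dvd_zero _)
    exact_mod_cast this
  -- power decomposition
  have hpw : ∀ m : ℕ, θ^m = (Q:ℝ)^(m / r₀) * θ^(m % r₀) := by
    intro m
    conv_lhs => rw [← Nat.div_add_mod m r₀]
    rw [pow_add, pow_mul, hQ]
  set E : Fin (p+1) → Fin (p+1) → ℕ := fun i j => n i j % r₀ with hEdef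
  set N' : Fin (p+1) → Fin (p+1) → ℕ := fun i j => n i j / r₀ with hN'def
  -- first-coordinate triangle identity
  have tri0 : ∀ i j k, i ≠ j → j ≠ k → i ≠ k →
      θ^(n i j) * (u i j:ℝ) + θ^(n j k) * (u j k:ℝ) = θ^(n i k) * (u i k:ℝ) := by
    intro i j k hij hjk hik
    linear_combination (-1 : ℝ) * h0 i j hij - h0 j k hjk + h0 i k hik
  have anti : ∀ i j, i ≠ j → θ^(n i j) * (u i j:ℝ) + θ^(n j i) * (u j i:ℝ) = 0 := by
    intro i j hij
    linear_combination (-1 : ℝ) * h0 i j hij - h0 j i hij.symm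
  -- step A
  have stepA : ∀ i j k, i ≠ j → j ≠ k → i ≠ k → (E i j = E j k ∧ E j k = E i k) := by
    intro i j k hij hjk hik
    have key := tri0 i j k hij hjk hik
    rw [hpw (n i j), hpw (n j k), hpw (n i k)] at key
    have heq : ((Q^(N' i j) * u i j : ℚ):ℝ) * θ^(E i j)
        + ((Q^(N' j k) * u j k : ℚ):ℝ) * θ^(E j k)
        + ((-(Q^(N' i k) * u i k) : ℚ):ℝ) * θ^(E i k) = 0 := by
      push_cast
      linear_combination key
    exact three_term θ hθ1 r₀ hr₀pos Q hQ hmin _ _ _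
      (Nat.mod_lt _ hr₀pos) (Nat.mod_lt _ hr₀pos) (Nat.mod_lt _ hr₀pos)
      _ _ _ (mul_ne_zero (pow_ne_zero _ hQ0) (hune i j hij))
      (mul_ne_zero (pow_ne_zero _ hQ0) (hune j k hjk))
      (neg_ne_zero.mpr (mul_ne_zero (pow_ne_zero _ hQ0) (hune i k hik))) heq
  -- third element
  have third : ∀ i j : Fin (p+1), ∃ k, k ≠ i ∧ k ≠ j := by
    intro i j
    by_contra hcon
    push_neg at hcon
    have hsub : (Finset.univ : Finset (Fin (p+1))) ⊆ {i, j} := by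
      intro k _
      rcases eq_or_ne k i with h | h
      · simp [h]
      · simp [hcon k h]
    have hcard := Finset.card_le_card hsub
    have : ({i, j} : Finset (Fin (p+1))).card ≤ 2 :=
      le_trans (Finset.card_insert_le _ _) (by simp)
    simp only [Finset.card_univ, Fintype.card_fin] at hcard
    omega
  have h01 : (0 : Fin (p+1)) ≠ 1 := by
    intro h
    have := congrArg Fin.val h
    have h1p : 1 % (p+1) = 1 := Nat.mod_eq_of_lt (by omega)
    simp [Fin.val_one', h1p] at this
  -- tri_const
  have tri_const : ∀ (F : Fin (p+1) → Fin (p+1) → ℕ),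
      (∀ i j k, i ≠ j → j ≠ k → i ≠ k → (F i j = F j k ∧ F j k = F i k)) →
      ∀ i j, i ≠ j → F i j = F 0 1 := by
    intro F hF i j hij
    have share : ∀ x y z, x ≠ y → x ≠ z → y ≠ z → F x y = F x z := by
      intro x y z hxy hxz hyz
      exact (hF x y z hxy hyz hxz).1.trans (hF x y z hxy hyz hxz).2
    have share2 : ∀ x y z, x ≠ y → y ≠ z → x ≠ z → F y z = F x z :=
      fun x y z h1 h2 h3 => (hF x y z h1 h2 h3).2
    by_cases hi0 : i = 0
    · subst hi0
      by_cases hj1 : j = 1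
      · subst hj1; rfl
      · exact share 0 j 1 hij h01 hj1
    · by_cases hj0 : j = 0
      · subst hj0
        by_cases hi1 : i = 1
        · subst hi1
          obtain ⟨k, hk1, hk0⟩ := third 1 0
          have e1 := hF 1 0 k (Ne.symm h01) (Ne.symm hk0) (Ne.symm hk1)
          have e2 := hF 0 1 k h01 (Ne.symm hk1) (Ne.symm hk0)
          rw [e1.1, e1.2, ← e2.1]
        · exact (hF i 0 1 hij h01 hi1).1
      · by_cases hj1 : j = 1
        · subst hj1
          exact share2 0 i 1 (Ne.symm hi0) hij h01
        · have hh1 : F i j = F 0 j := share2 0 i j (Ne.symm hi0) hij (Ne.symm hj0)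
          have hh2 : F 0 j = F 0 1 := share 0 j 1 (Ne.symm hj0) h01 hj1
          rw [hh1, hh2]
  have hE : ∀ i j, i ≠ j → E i j = E 0 1 := tri_const E stepA
  set e₀ := E 0 1 with he₀
  have hθe : θ^e₀ ≠ 0 := pow_ne_zero _ hθne
  have hpw2 : ∀ i j, i ≠ j → θ^(n i j) = (Q:ℝ)^(N' i j) * θ^e₀ := by
    intro i j hij
    rw [hpw (n i j), ← hE i j hij]
  have hrep : ∀ i j, i ≠ j → n i j = r₀ * (N' i j) + e₀ := by
    intro i j hij
    rw [← hE i j hij]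
    exact (Nat.div_add_mod (n i j) r₀).symm
  -- rational first-coordinate relations
  have triQ : ∀ i j k, i ≠ j → j ≠ k → i ≠ k →
      Q^(N' i j) * (u i j : ℚ) + Q^(N' j k) * (u j k : ℚ) = Q^(N' i k) * (u i k : ℚ) := by
    intro i j k hij hjk hik
    have key := tri0 i j k hij hjk hik
    rw [hpw2 i j hij, hpw2 j k hjk, hpw2 i k hik] at key
    have key3 : (((Q:ℝ)^(N' i j) * (u i j:ℝ) + (Q:ℝ)^(N' j k) * (u j k:ℝ))
        - (Q:ℝ)^(N' i k) * (u i k:ℝ)) * θ^e₀ = 0 := by linear_combination key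
    rcases mul_eq_zero.mp key3 with h | h
    · have : (Q:ℝ)^(N' i j) * (u i j:ℝ) + (Q:ℝ)^(N' j k) * (u j k:ℝ)
          = (Q:ℝ)^(N' i k) * (u i k:ℝ) := by linarith
      exact_mod_cast this
    · exact absurd h hθe
  have antiQ : ∀ i j, i ≠ j →
      Q^(N' i j) * (u i j : ℚ) = - (Q^(N' j i) * (u j i : ℚ)) := by
    intro i j hij
    have key := anti i j hij
    rw [hpw2 i j hij, hpw2 j i hij.symm] at key
    have key3 : (((Q:ℝ)^(N' i j) * (u i j:ℝ) + (Q:ℝ)^(N' j i) * (u j i:ℝ))) * θ^e₀ = 0 := by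
      linear_combination key
    rcases mul_eq_zero.mp key3 with h | h
    · have : (Q:ℝ)^(N' i j) * (u i j:ℝ) = -((Q:ℝ)^(N' j i) * (u j i:ℝ)) := by linarith
      exact_mod_cast this
    · exact absurd h hθe
  -- step B
  have stepB : ∀ i j k, i ≠ j → j ≠ k → i ≠ k →
      (n i j : ℚ) * Q^(N' i j) * u i j + (n j k : ℚ) * Q^(N' j k) * u j k
        = (n i k : ℚ) * Q^(N' i k) * u i k := by
    intro i j k hij hjk hik
    have key : (n i j:ℝ) * c * (θ^(n i j) * θ⁻¹) * (u i j:ℝ) + θ^(n i j) * (v i j:ℝ)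
        + ((n j k:ℝ) * c * (θ^(n j k) * θ⁻¹) * (u j k:ℝ) + θ^(n j k) * (v j k:ℝ))
        = (n i k:ℝ) * c * (θ^(n i k) * θ⁻¹) * (u i k:ℝ) + θ^(n i k) * (v i k:ℝ) := by
      linear_combination (-1:ℝ) * h1 i j hij - h1 j k hjk + h1 i k hik
    rw [hpw2 i j hij, hpw2 j k hjk, hpw2 i k hik] at key
    set A : ℚ := (n i j : ℚ) * Q^(N' i j) * u i j + (n j k : ℚ) * Q^(N' j k) * u j k
      - (n i k : ℚ) * Q^(N' i k) * u i k with hA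
    set B : ℚ := Q^(N' i k) * v i k - Q^(N' i j) * v i j - Q^(N' j k) * v j k with hB
    have keyr : (c * θ⁻¹ * (A:ℝ)) * θ^e₀ = ((B:ℝ)) * θ^e₀ := by
      rw [hA, hB]
      push_cast
      linear_combination key
    have keyr2 : c * θ⁻¹ * (A:ℝ) = (B:ℝ) := mul_right_cancel₀ hθe keyr
    by_cases hA0 : A = 0
    · rw [hA] at hA0
      linear_combination hA0
    · exfalso
      apply hc (B / A)
      have hAR : (A:ℝ) ≠ 0 := by exact_mod_cast hA0
      push_cast
      rw [div_mul_eq_mul_div, eq_div_iff hAR]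
      have : c * (A:ℝ) = (c * θ⁻¹ * (A:ℝ)) * θ := by
        field_simp
      rw [this, keyr2]
  -- rigidity of triangle labels
  have rigid : ∀ i j k, i ≠ j → j ≠ k → i ≠ k →
      (n i j = n j k ∧ n j k = n i k) ∨
      (n i j ≠ n j k ∧ n j k ≠ n i k ∧ n i j ≠ n i k) := by
    intro i j k hij hjk hik
    have hq1 := triQ i j k hij hjk hik
    have hq2 := stepB i j k hij hjk hik
    have e1 : ((n i j : ℚ) - (n i k : ℚ)) * (Q^(N' i j) * (u i j : ℚ))
        = ((n i k : ℚ) - (n j k : ℚ)) * (Q^(N' j k) * (u j k : ℚ)) := by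
      linear_combination hq2 - (n i k : ℚ) * hq1
    have e2 : ((n j k : ℚ) - (n i j : ℚ)) * (Q^(N' i j) * (u i j : ℚ))
        = ((n j k : ℚ) - (n i k : ℚ)) * (Q^(N' i k) * (u i k : ℚ)) := by
      linear_combination (n j k : ℚ) * hq1 - hq2
    have hxne : Q^(N' i j) * (u i j : ℚ) ≠ 0 :=
      mul_ne_zero (pow_ne_zero _ hQ0) (hune i j hij)
    have hyne : Q^(N' j k) * (u j k : ℚ) ≠ 0 :=
      mul_ne_zero (pow_ne_zero _ hQ0) (hune j k hjk)
    have hzne : Q^(N' i k) * (u i k : ℚ) ≠ 0 :=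
      mul_ne_zero (pow_ne_zero _ hQ0) (hune i k hik)
    by_cases hml : n i j = n i k
    · left
      have h3 : ((n i k : ℚ) - (n j k : ℚ)) * (Q^(N' j k) * (u j k : ℚ)) = 0 := by
        rw [← e1, hml]
        ring
      have h4 : (n i k : ℚ) = (n j k : ℚ) := by
        rcases mul_eq_zero.mp h3 with h | h
        · linarith [sub_eq_zero.mp h]
        · exact absurd h hyne
      have h5 : n i k = n j k := by exact_mod_cast h4
      exact ⟨hml.trans h5, h5.symm⟩
    · right
      have hnm : n i j ≠ n j k := by
        intro hnm
        have h3 : ((n j k : ℚ) - (n i k : ℚ)) * (Q^(N' i k) * (u i k : ℚ)) = 0 := by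
          rw [← e2, hnm]
          ring
        have h4 : n j k = n i k := by
          rcases mul_eq_zero.mp h3 with h | h
          · exact_mod_cast sub_eq_zero.mp h
          · exact absurd h hzne
        exact hml (hnm.trans h4)
      have hkl : n j k ≠ n i k := by
        intro hkl
        have h3 : ((n i j : ℚ) - (n i k : ℚ)) * (Q^(N' i j) * (u i j : ℚ)) = 0 := by
          rw [e1, hkl]
          ring
        have h4 : n i j = n i k := by
          rcases mul_eq_zero.mp h3 with h | h
          · exact_mod_cast sub_eq_zero.mp h
          · exact absurd h hxne
        exact hml h4
      exact ⟨hnm, hkl, hml⟩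
  -- scaling facts for Q = num/den
  have hdenne : ((Q.den:ℚ)) ≠ 0 := by
    have := Q.den_nz
    exact_mod_cast Nat.cast_ne_zero.mpr this
  have hQs : Q * (Q.den:ℚ) = (Q.num:ℚ) := by
    rw [mul_comm]
    exact_mod_cast Rat.den_mul_eq_num Q
  have hscale : ∀ (w M : ℕ), w ≤ M →
      Q^w * ((Q.den:ℚ))^M = ((Q.num:ℚ))^w * ((Q.den:ℚ))^(M-w) := by
    intro w M hw
    have h1 : ((Q.den:ℚ))^M = ((Q.den:ℚ))^w * ((Q.den:ℚ))^(M-w) := by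
      rw [← pow_add]
      congr 1
      omega
    rw [h1, ← mul_assoc, ← mul_pow, hQs]
  have ht₀pos : 0 < Q.num := Rat.num_pos.mpr hQpos
  -- the main dichotomy
  by_cases hQp : (p:ℤ) ∣ Q.num ∨ (p:ℤ) ∣ ((Q.den:ℤ))
  · -- p divides numerator or denominator : all levels equal
    have hcop : ¬ ((p:ℤ) ∣ Q.num ∧ (p:ℤ) ∣ ((Q.den:ℤ))) := by
      rintro ⟨h1, h2⟩
      have h1' : p ∣ Q.num.natAbs := by
        have := Int.natAbs_dvd_natAbs.mpr h1
        simpa using this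
      have h2' : p ∣ Q.den := by
        have := Int.natAbs_dvd_natAbs.mpr h2
        simpa using this
      have hg : Nat.gcd Q.num.natAbs Q.den = 1 := Q.reduced
      have := Nat.dvd_gcd h1' h2'
      rw [hg] at this
      have := Nat.le_of_dvd one_pos this
      omega
    -- case D: all triangle labels equal
    have mono : ∀ i j k, i ≠ j → j ≠ k → i ≠ k → (n i j = n j k ∧ n j k = n i k) := by
      intro i j k hij hjk hik
      rcases rigid i j k hij hjk hik with h | ⟨hd1, hd2, hd3⟩
      · exact h
      exfalso
      have hr1 := hrep i j hij
      have hr2 := hrep j k hjk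
      have hr3 := hrep i k hik
      have hN1 : N' i j ≠ N' j k := by intro h; exact hd1 (by rw [hr1, hr2, h])
      have hN2 : N' j k ≠ N' i k := by intro h; exact hd2 (by rw [hr2, hr3, h])
      have hN3 : N' i j ≠ N' i k := by intro h; exact hd3 (by rw [hr1, hr3, h])
      have hq1 := triQ i j k hij hjk hik
      set M := N' i j + N' j k + N' i k with hM
      have intEq : (Q.num^(N' i j) * ((Q.den:ℤ))^(M - N' i j) * u i j)
          + (Q.num^(N' j k) * ((Q.den:ℤ))^(M - N' j k) * u j k)
          = Q.num^(N' i k) * ((Q.den:ℤ))^(M - N' i k) * u i k := by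
        have hcast : ((Q.num^(N' i j) * ((Q.den:ℤ))^(M - N' i j) * u i j
            + Q.num^(N' j k) * ((Q.den:ℤ))^(M - N' j k) * u j k : ℤ) : ℚ)
            = ((Q.num^(N' i k) * ((Q.den:ℤ))^(M - N' i k) * u i k : ℤ) : ℚ) := by
          push_cast
          rw [← hscale (N' i j) M (by omega), ← hscale (N' j k) M (by omega),
            ← hscale (N' i k) M (by omega)]
          linear_combination ((Q.den:ℚ))^M * hq1
        exact_mod_cast hcast
      rcases hQp with ht | hs
      · -- p divides numerator
        have hsnd : ¬ (p:ℤ) ∣ ((Q.den:ℤ)) := fun h => hcop ⟨ht, h⟩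
        set tn := Q.num.natAbs with htndef
        have htn : (tn:ℤ) = Q.num := Int.natAbs_of_nonneg ht₀pos.le
        have htnne : tn ≠ 0 := by
          have : 0 < tn := Int.natAbs_pos.mpr (ne_of_gt ht₀pos)
          omega
        have hdvtn : p ∣ tn := by
          have := Int.natAbs_dvd_natAbs.mpr ht
          simpa using this
        set vp := tn.factorization p with hvpdef
        set τ := ordCompl[p] tn with hτdef
        have hfact : p^vp * τ = tn := Nat.ordProj_mul_ordCompl_eq_self tn p
        have hτnd : ¬ p ∣ τ := Nat.not_dvd_ordCompl hp htnne
        have hvp1 : 0 < vp := hp.factorization_pos_of_dvd htnne hdvtn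
        have ht₀eq : Q.num = (p:ℤ)^vp * (τ:ℤ) := by
          rw [← htn, ← hfact]
          push_cast
          ring
        have form : ∀ (w r : ℕ) (uu : ℤ), ((p:ℤ)^vp * (τ:ℤ))^w * ((Q.den:ℤ))^r * uu
            = (p:ℤ)^(vp*w) * ((τ:ℤ)^w * ((Q.den:ℤ))^r * uu) := by
          intro w r uu
          rw [mul_pow, pow_mul]
          ring
        rw [ht₀eq, form, form, form] at intEq
        have hnd : ∀ (w r : ℕ) (uu : ℤ), ¬(p:ℤ) ∣ uu → ¬ (p:ℤ) ∣ ((τ:ℤ)^w * ((Q.den:ℤ))^r * uu) := by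
          intro w r uu huu hdd
          rcases hpZ.dvd_mul.mp hdd with h | h
          · rcases hpZ.dvd_mul.mp h with h' | h'
            · have h'' := hpZ.dvd_of_dvd_pow h'
              have : p ∣ τ := by exact_mod_cast h''
              exact hτnd this
            · exact hsnd (hpZ.dvd_of_dvd_pow h')
          · exact huu h
        exact key_int hpZ (hnd _ _ _ (hu i j hij)) (hnd _ _ _ (hu j k hjk))
          (hnd _ _ _ (hu i k hik))
          (fun h => hN1 (Nat.eq_of_mul_eq_mul_left hvp1 h))
          (fun h => hN2 (Nat.eq_of_mul_eq_mul_left hvp1 h))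
          (fun h => hN3 (Nat.eq_of_mul_eq_mul_left hvp1 h)) intEq
      · -- p divides denominator
        have htnd : ¬ (p:ℤ) ∣ Q.num := fun h => hcop ⟨h, hs⟩
        set sn := Q.den with hsndef
        have hsnne : sn ≠ 0 := Q.den_nz
        have hdvsn : p ∣ sn := by
          have := Int.natAbs_dvd_natAbs.mpr hs
          simpa using this
        set vp := sn.factorization p with hvpdef
        set τ := ordCompl[p] sn with hτdef
        have hfact : p^vp * τ = sn := Nat.ordProj_mul_ordCompl_eq_self sn p
        have hτnd : ¬ p ∣ τ := Nat.not_dvd_ordCompl hp hsnne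
        have hvp1 : 0 < vp := hp.factorization_pos_of_dvd hsnne hdvsn
        have hs₀eq : ((sn:ℤ)) = (p:ℤ)^vp * (τ:ℤ) := by
          rw [← hfact]
          push_cast
          ring
        have form : ∀ (w r : ℕ) (uu : ℤ), Q.num^w * ((p:ℤ)^vp * (τ:ℤ))^r * uu
            = (p:ℤ)^(vp*r) * (Q.num^w * (τ:ℤ)^r * uu) := by
          intro w r uu
          rw [mul_pow, pow_mul]
          ring
        rw [hs₀eq, form, form, form] at intEq
        have hnd : ∀ (w r : ℕ) (uu : ℤ), ¬(p:ℤ) ∣ uu → ¬ (p:ℤ) ∣ (Q.num^w * (τ:ℤ)^r * uu) := by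
          intro w r uu huu hdd
          rcases hpZ.dvd_mul.mp hdd with h | h
          · rcases hpZ.dvd_mul.mp h with h' | h'
            · exact htnd (hpZ.dvd_of_dvd_pow h')
            · have h'' := hpZ.dvd_of_dvd_pow h'
              have : p ∣ τ := by exact_mod_cast h''
              exact hτnd this
          · exact huu h
        have hsub1 : N' i j ≤ M := by omega
        have hsub2 : N' j k ≤ M := by omega
        have hsub3 : N' i k ≤ M := by omega
        exact key_int hpZ (hnd _ _ _ (hu i j hij)) (hnd _ _ _ (hu j k hjk))
          (hnd _ _ _ (hu i k hik))
          (fun h => hN1 (by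
            have := Nat.eq_of_mul_eq_mul_left hvp1 h
            omega))
          (fun h => hN2 (by
            have := Nat.eq_of_mul_eq_mul_left hvp1 h
            omega))
          (fun h => hN3 (by
            have := Nat.eq_of_mul_eq_mul_left hvp1 h
            omega)) intEq
    have alln : ∀ i j, i ≠ j → n i j = n 0 1 := tri_const n mono
    set g : Fin (p+1) → ℤ := fun i => if i = 0 then 0 else u i 0 with hgdef
    apply pigeon p hp g
    intro i j hij
    by_cases hi : i = 0
    · subst hi
      have hj0 : j ≠ 0 := Ne.symm hij
      have hval : g 0 - g j = - u j 0 := by simp [hgdef, hj0]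
      rw [hval]
      exact fun hdd => hu j 0 hj0 (dvd_neg.mp hdd)
    · by_cases hj : j = 0
      · subst hj
        have hval : g i - g 0 = u i 0 := by simp [hgdef, hi]
        rw [hval]
        exact hu i 0 hi
      · have t := tri0 i j 0 hij hj hi
        rw [alln i j hij, alln j 0 hj, alln i 0 hi] at t
        have hreal : (u i j : ℝ) + (u j 0:ℝ) = (u i 0:ℝ) := by
          have ht2 : θ^(n 0 1) * ((u i j:ℝ) + (u j 0:ℝ) - (u i 0:ℝ)) = 0 := by
            linear_combination t
          rcases mul_eq_zero.mp ht2 with h | h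
          · exact absurd h (pow_ne_zero _ hθne)
          · linarith
        have hint2 : u i j + u j 0 = u i 0 := by exact_mod_cast hreal
        have hval : g i - g j = u i j := by
          simp only [hgdef, if_neg hi, if_neg hj]
          omega
        rw [hval]
        exact hu i j hij
  · -- case C: valuation zero
    push_neg at hQp
    obtain ⟨hnt, hns⟩ := hQp
    set M₀ := ∑ i : Fin (p+1), ∑ j : Fin (p+1), N' i j with hM₀
    have hM₀le : ∀ i j, N' i j ≤ M₀ := by
      intro i j
      calc N' i j ≤ ∑ j' : Fin (p+1), N' i j' :=
            Finset.single_le_sum (fun _ _ => Nat.zero_le _) (Finset.mem_univ j)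
        _ ≤ M₀ := Finset.single_le_sum (f := fun i' => ∑ j' : Fin (p+1), N' i' j')
            (fun _ _ => Nat.zero_le _) (Finset.mem_univ i)
    set g : Fin (p+1) → ℤ :=
      fun i => if i = 0 then 0 else Q.num^(N' i 0) * ((Q.den:ℤ))^(M₀ - N' i 0) * u i 0 with hgdef
    apply pigeon p hp g
    intro i j hij
    have hclaim : g i - g j = Q.num^(N' i j) * ((Q.den:ℤ))^(M₀ - N' i j) * u i j := by
      have hcast : ((g i - g j : ℤ):ℚ)
          = ((Q.num^(N' i j) * ((Q.den:ℤ))^(M₀ - N' i j) * u i j : ℤ):ℚ) := by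
        by_cases hi : i = 0
        · subst hi
          have hj0 : j ≠ 0 := Ne.symm hij
          have haq := antiQ 0 j hij
          simp only [hgdef, if_pos rfl, if_neg hj0]
          push_cast
          rw [← hscale _ M₀ (hM₀le 0 j), ← hscale _ M₀ (hM₀le j 0)]
          linear_combination (-((Q.den:ℚ))^M₀) * haq
        · by_cases hj : j = 0
          · subst hj
            simp only [hgdef, if_neg hi, if_pos rfl]
            push_cast
            ring
          · have hq1 := triQ i j 0 hij hj hi
            simp only [hgdef, if_neg hi, if_neg hj]
            push_cast
            rw [← hscale _ M₀ (hM₀le i j), ← hscale _ M₀ (hM₀le j 0),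
              ← hscale _ M₀ (hM₀le i 0)]
            linear_combination (-((Q.den:ℚ))^M₀) * hq1
      exact_mod_cast hcast
    rw [hclaim]
    intro hdd
    rcases hpZ.dvd_mul.mp hdd with h | h
    · rcases hpZ.dvd_mul.mp h with h' | h'
      · exact hnt (hpZ.dvd_of_dvd_pow h')
      · exact hns (hpZ.dvd_of_dvd_pow h')
    · exact hu i j hij h


end Stmt1Aux

open Stmt1Aux in
/-- Theorem 1.2(i): if `ρ⁻¹ = (t/s)^{1/r}` with `gcd(s,t)=1` and `c ≠ κρ⁻¹` for all `κ ∈ ℚ`,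
then there are at most `p` mutually orthogonal exponentials in `L²(μ_{M,D})`, and `p` is attained. -/
theorem stmt1 (p : ℕ) (hp : p.Prime) (ρ c : ℝ) (hρ0 : 0 < ρ) (hρ1 : ρ < 1)
    (D : Fin p → (Fin 2 → ℤ)) (hD : Function.Injective D)
    (a : Fin 2 → ℤ) (hZ : ZeroSetCond p D a)
    (μ : Measure (Fin 2 → ℝ)) (hμ : IsSelfAffine μ (Mupper ρ ρ c) (digitR D))
    (s t r : ℕ) (hs : 0 < s) (ht : 0 < t) (hr : 0 < r)
    (hst : Nat.gcd s t = 1) (hρr : ρ⁻¹ ^ r = (t : ℝ) / (s : ℝ))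
    (hc : ∀ κ : ℚ, c ≠ (κ : ℝ) * ρ⁻¹) :
    (∀ Λ : Finset (Fin 2 → ℝ), IsOrthoSet μ ↑Λ → Λ.card ≤ p) ∧
      (∃ Λ : Finset (Fin 2 → ℝ), IsOrthoSet μ ↑Λ ∧ Λ.card = p) := by
  haveI hPM : IsProbabilityMeasure μ := hμ.1
  have heq := hμ.2.2
  have hρ : ρ ≠ 0 := ne_of_gt hρ0
  have hp2 := hp.two_le
  have hpR : (0:ℝ) < p := by exact_mod_cast hp.pos
  have hθ1 : (1:ℝ) < ρ⁻¹ := (one_lt_inv_iff₀).mpr ⟨hρ0, hρ1⟩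
  have ha0 : (1:ℝ) ≤ (a 0 : ℝ) := by exact_mod_cast (hZ.1 0).1
  constructor
  · -- upper bound
    intro Λ hΛ
    by_contra hlt
    push_neg at hlt
    obtain ⟨Λ', hsub, hcard⟩ := Finset.exists_subset_card_eq (show p+1 ≤ Λ.card by omega)
    have e := Λ'.equivFinOfCardEq hcard
    set lam : Fin (p+1) → (Fin 2 → ℝ) := fun i => ((e.symm i : Λ') : Fin 2 → ℝ) with hlam
    have hmem : ∀ i, lam i ∈ Λ := fun i => hsub (e.symm i).2
    have hinj : ∀ i j, i ≠ j → lam i ≠ lam j := by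
      intro i j hij hcontra
      apply hij
      have : (e.symm i : Λ') = (e.symm j : Λ') := Subtype.ext hcontra
      simpa using congrArg e this
    have hrat : ∃ m : ℕ, 0 < m ∧ ∃ q : ℚ, (ρ⁻¹) ^ m = (q : ℝ) := by
      refine ⟨r, hr, (t:ℚ)/(s:ℚ), ?_⟩
      push_cast
      exact hρr
    apply core p hp ρ⁻¹ c hθ1 hc hrat lam
    intro i j hij
    obtain ⟨n, u, v, hn1, hu, hv, h0, h1⟩ :=
      diff_data p hp ρ c hρ0 hρ1 D a hZ μ heq (lam i - lam j)
        (hΛ (lam i) (hmem i) (lam j) (hmem j) (hinj i j hij))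
    refine ⟨n, u, v, hn1, hu, hv, ?_, ?_⟩
    · simpa using h0
    · have : ρ⁻¹^n * ρ = ρ⁻¹^n * (ρ⁻¹)⁻¹ := by rw [inv_inv]
      rw [← this]
      simpa using h1
  · -- lower bound
    set Lam : ℕ → (Fin 2 → ℝ) := fun j =>
      ![ρ⁻¹ * ((j:ℝ) * (a 0 : ℝ) / p), c * ((j:ℝ) * (a 0 : ℝ) / p)
        + ρ⁻¹ * ((j:ℝ) * (a 1 : ℝ) / p)] with hLam
    have hLaminj : Set.InjOn Lam (Finset.range p) := by
      intro j _ k _ hjk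
      have h0 := congrFun hjk 0
      simp only [hLam, Matrix.cons_val_zero] at h0
      have hkey : ((j:ℝ) - (k:ℝ)) * (ρ⁻¹ * (a 0:ℝ) / p) = 0 := by
        linear_combination h0
      have hpos : (0:ℝ) < ρ⁻¹ * (a 0:ℝ) / p := by
        have h1 : (0:ℝ) < ρ⁻¹ := inv_pos.mpr hρ0
        have h2 : (0:ℝ) < (a 0:ℝ) := by linarith
        positivity
      rcases mul_eq_zero.mp hkey with h | h
      · have : (j:ℝ) = (k:ℝ) := by linarith [sub_eq_zero.mp h]
        exact_mod_cast this
      · exact absurd h (ne_of_gt hpos)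
    refine ⟨(Finset.range p).image Lam, ?_, ?_⟩
    · -- orthogonality
      intro l hl l' hl' hne
      simp only [Finset.coe_image, Set.mem_image, Finset.mem_coe, Finset.mem_range] at hl hl'
      obtain ⟨j, hj, rfl⟩ := hl
      obtain ⟨k, hk, rfl⟩ := hl'
      have hjk : j ≠ k := fun h => hne (by rw [h])
      set w : Fin 2 → ℝ := fun i => ((j:ℝ) - (k:ℝ)) * (a i : ℝ) / p with hw
      have hdiff : Lam j - Lam k = ![ρ⁻¹ * w 0, c * w 0 + ρ⁻¹ * w 1] := by
        funext i
        rw [Pi.sub_apply]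
        revert i
        rw [Fin.forall_fin_two]
        constructor
        · simp only [hLam, hw, Matrix.cons_val_zero]
          ring
        · simp only [hLam, hw, Matrix.cons_val_one, Matrix.head_cons, Matrix.cons_val_zero]
          ring
      rw [hdiff, feq ρ c hρ (digitR D) μ heq w]
      have hmask : mask (digitR D) w = 0 := by
        apply (hZ.2 w).mpr
        rcases Nat.lt_or_ge j k with hlt | hge
        · refine ⟨p - (k - j), by omega, by omega, fun i => -(a i), ?_⟩
          intro i
          have hc1 : ((p - (k - j) : ℕ) : ℝ) = (p:ℝ) - ((k:ℝ) - (j:ℝ)) := by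
            push_cast [Nat.cast_sub (by omega : k - j ≤ p), Nat.cast_sub (by omega : j ≤ k)]
            ring
          rw [hw, hc1]
          push_cast
          field_simp
          ring
        · have hgt : k < j := by omega
          refine ⟨j - k, by omega, by omega, fun _ => 0, ?_⟩
          intro i
          have hc1 : ((j - k : ℕ) : ℝ) = (j:ℝ) - (k:ℝ) := by
            push_cast [Nat.cast_sub (by omega : k ≤ j)]
            ring
          rw [hw, hc1]
          push_cast
          ring
      rw [hmask, zero_mul]
    · rw [Finset.card_image_of_injOn hLaminj, Finset.card_range]

end
end

section
/- Suppose ρ₁ = ρ₂ = ρ and ρ⁻¹ = (t/s)^{1/r} for some positive integers s, t, r with gcd(s, t) = 1 and t ∉ pℤ. If c = κ·ρ⁻¹ for some κ ∈ ℚ and s ∈ pℤ, then L²(μ_{M,D}) contains arbitrarily large orthogonal sets of exponentials: for every N ∈ ℕ there exists an orthogonal set of exponentials for μ_{M,D} with at least N elements. -/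
open MeasureTheory Complex Matrix
open scoped ENNReal

noncomputable section

/-! ### Auxiliary lemmas -/

lemma expChar_split (ξ x d : Fin 2 → ℝ) : expChar ξ (x + d) = expChar ξ x * expChar ξ d := by
  unfold expChar
  rw [← Complex.exp_add]
  congr 1
  push_cast [Pi.add_apply]
  ring

lemma expChar_mulVec (B : Matrix (Fin 2) (Fin 2) ℝ) (ξ y : Fin 2 → ℝ) :
    expChar ξ (B.mulVec y) = expChar (B.transpose.mulVec ξ) y := by
  have h : ξ 0 * B.mulVec y 0 + ξ 1 * B.mulVec y 1
      = B.transpose.mulVec ξ 0 * y 0 + B.transpose.mulVec ξ 1 * y 1 := by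
    simp [Matrix.mulVec, dotProduct, Fin.sum_univ_two, Matrix.transpose_apply]
    ring
  unfold expChar
  rw [h]

lemma cont_expChar (ξ : Fin 2 → ℝ) : Continuous (expChar ξ) := by
  unfold expChar
  exact Complex.continuous_exp.comp <| continuous_const.mul <|
    Complex.continuous_ofReal.comp <| by continuity

lemma norm_expChar (ξ x : Fin 2 → ℝ) : ‖expChar ξ x‖ = 1 := by
  unfold expChar
  rw [Complex.norm_exp]
  norm_num [Complex.mul_re]

lemma integrable_expChar_comp {μ : Measure (Fin 2 → ℝ)} [IsFiniteMeasure μ]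
    (ξ : Fin 2 → ℝ) {f : (Fin 2 → ℝ) → (Fin 2 → ℝ)} (hf : Continuous f) :
    Integrable (fun x => expChar ξ (f x)) μ :=
  (integrable_const (1:ℝ)).mono' (((cont_expChar ξ).comp hf).aestronglyMeasurable)
    (Filter.Eventually.of_forall fun x => le_of_eq (norm_expChar ξ (f x)))

lemma cont_mulVec (A : Matrix (Fin 2) (Fin 2) ℝ) :
    Continuous fun y : Fin 2 → ℝ => A.mulVec y := by
  have h := LinearMap.continuous_of_finiteDimensional (Matrix.mulVecLin A)
  exact h.congr fun y => by simp [Matrix.mulVecLin_apply]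

lemma ft_step {p : ℕ} (M : Matrix (Fin 2) (Fin 2) ℝ) (hM : IsUnit M.det)
    (D : Fin p → (Fin 2 → ℝ)) (μ : Measure (Fin 2 → ℝ))
    (hμ : IsSelfAffine μ M D) (ξ : Fin 2 → ℝ) :
    ftMeasure μ (M.transpose.mulVec ξ) = mask D ξ * ftMeasure μ ξ := by
  obtain ⟨hprob, -, hself⟩ := hμ
  haveI : IsProbabilityMeasure μ := hprob
  set η := M.transpose.mulVec ξ with hη
  have hpt : ∀ y, expChar η (M⁻¹.mulVec y) = expChar ξ y := by
    intro y
    rw [expChar_mulVec]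
    congr 1
    rw [hη, Matrix.mulVec_mulVec, ← Matrix.transpose_mul, Matrix.mul_nonsing_inv M hM,
      Matrix.transpose_one, Matrix.one_mulVec]
  have hconti : ∀ i : Fin p, Continuous fun x : Fin 2 → ℝ => M⁻¹.mulVec (x + D i) :=
    fun i => (cont_mulVec M⁻¹).comp (continuous_id.add continuous_const)
  have hint : ∀ i : Fin p, Integrable (fun x => expChar η x)
      (μ.map (fun x => M⁻¹.mulVec (x + D i))) := by
    intro i
    rw [integrable_map_measure (cont_expChar η).aestronglyMeasurable (hconti i).aemeasurable]
    exact integrable_expChar_comp η (hconti i)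
  have hi : ∀ i : Fin p, (∫ x, expChar η x ∂(μ.map (fun x => M⁻¹.mulVec (x + D i))))
      = (∫ x, expChar ξ x ∂μ) * expChar ξ (D i) := by
    intro i
    rw [integral_map (hconti i).aemeasurable (cont_expChar η).aestronglyMeasurable]
    simp_rw [hpt, expChar_split]
    exact integral_mul_const _ _
  have key : ftMeasure μ η = (p : ℝ≥0∞)⁻¹.toReal •
      ∑ i : Fin p, (∫ x, expChar η x ∂(μ.map (fun x => M⁻¹.mulVec (x + D i)))) := by
    rw [ftMeasure]
    conv_lhs => rw [hself]
    rw [integral_smul_measure, integral_finset_sum_measure (fun i _ => hint i)]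
  rw [key]
  simp_rw [hi]
  rw [← Finset.mul_sum, ENNReal.toReal_inv, ENNReal.toReal_natCast, mask, ftMeasure,
    Complex.real_smul]
  push_cast
  ring

lemma mupper_t_mulVec (ρ c : ℝ) (ξ : Fin 2 → ℝ) :
    (Mupper ρ ρ c).transpose.mulVec ξ = ![ρ⁻¹ * ξ 0, c * ξ 0 + ρ⁻¹ * ξ 1] := by
  funext i
  fin_cases i <;>
    simp [Mupper, Matrix.mulVec, dotProduct, Fin.sum_univ_two, Matrix.transpose_apply]

lemma det_mupper (ρ c : ℝ) (hρ : ρ ≠ 0) : IsUnit (Mupper ρ ρ c).det := by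
  rw [Mupper, Matrix.det_fin_two_of]
  simp [isUnit_iff_ne_zero, hρ]

lemma iterT (q κ : ℝ) : ∀ (n : ℕ) (ξ : Fin 2 → ℝ),
    (fun ξ : Fin 2 → ℝ => ![q * ξ 0, (κ * q) * ξ 0 + q * ξ 1])^[n] ξ
      = ![q ^ n * ξ 0, q ^ n * ((n : ℝ) * κ * ξ 0 + ξ 1)] := by
  intro n
  induction n with
  | zero => intro ξ; funext i; fin_cases i <;> simp
  | succ n ih =>
    intro ξ
    rw [Function.iterate_succ_apply', ih]
    funext i
    fin_cases i <;> simp <;> push_cast <;> ring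

lemma ft_iter_zero {p : ℕ} {D : Fin p → (Fin 2 → ℝ)} {μ : Measure (Fin 2 → ℝ)}
    {Tm : (Fin 2 → ℝ) → (Fin 2 → ℝ)}
    (hstep : ∀ ξ, ftMeasure μ (Tm ξ) = mask D ξ * ftMeasure μ ξ)
    {ζ : Fin 2 → ℝ} (hζ : mask D ζ = 0) : ∀ n, ftMeasure μ (Tm^[n+1] ζ) = 0 := by
  intro n
  induction n with
  | zero => rw [Function.iterate_one, hstep, hζ, zero_mul]
  | succ n ih => rw [Function.iterate_succ_apply', hstep, ih, mul_zero]

lemma fermat_pow (p t G j : ℕ) (hp : p.Prime) (htp : ¬ p ∣ t) (hd : (p-1) ∣ G) :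
    ∃ z : ℤ, (t:ℤ)^(G*j) = 1 + p * z := by
  haveI := Fact.mk hp
  obtain ⟨m, hm⟩ := hd
  have ht0 : (t : ZMod p) ≠ 0 := by
    rw [Ne, ZMod.natCast_eq_zero_iff]; exact htp
  have h1 : ((t:ℤ)^(G*j) - 1 : ℤ) % p = 0 := by
    have : (((t:ℤ)^(G*j) - 1 : ℤ) : ZMod p) = 0 := by
      push_cast
      rw [hm, show (p-1)*m*j = m*j*(p-1) by ring, pow_mul,
        ZMod.pow_card_sub_one_eq_one (pow_ne_zero _ ht0)]
      ring
    rwa [ZMod.intCast_zmod_eq_zero_iff_dvd, Int.dvd_iff_emod_eq_zero] at this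
  obtain ⟨z, hz⟩ := Int.dvd_of_emod_eq_zero h1
  exact ⟨z, by linarith⟩

/-- Theorem 1.2(ii)(b): if `ρ⁻¹ = (t/s)^{1/r}` with `gcd(s,t)=1`, `p ∤ t`, `c = κρ⁻¹` with
`κ ∈ ℚ` and `p ∣ s`, then `L²(μ_{M,D})` contains arbitrarily large orthogonal sets of
exponentials. -/
theorem stmt3 (p : ℕ) (hp : p.Prime) (ρ c : ℝ) (hρ0 : 0 < ρ) (hρ1 : ρ < 1)
    (D : Fin p → (Fin 2 → ℤ)) (hD : Function.Injective D)
    (a : Fin 2 → ℤ) (hZ : ZeroSetCond p D a)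
    (μ : Measure (Fin 2 → ℝ)) (hμ : IsSelfAffine μ (Mupper ρ ρ c) (digitR D))
    (s t r : ℕ) (hs : 0 < s) (ht : 0 < t) (hr : 0 < r)
    (hst : Nat.gcd s t = 1) (hρr : ρ⁻¹ ^ r = (t : ℝ) / (s : ℝ))
    (htp : ¬ p ∣ t) (hc : ∃ κ : ℚ, c = (κ : ℝ) * ρ⁻¹) (hsp : p ∣ s) :
    ∀ N : ℕ, ∃ Λ : Finset (Fin 2 → ℝ), IsOrthoSet μ ↑Λ ∧ N ≤ Λ.card := by
  intro N
  obtain ⟨κ, hc⟩ := hc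
  obtain ⟨s', hs'⟩ := hsp
  have hρne : ρ ≠ 0 := ne_of_gt hρ0
  have hp2 : 2 ≤ p := hp.two_le
  have hpR : (0:ℝ) < p := by positivity
  have hpRne : (p:ℝ) ≠ 0 := ne_of_gt hpR
  have htR : (0:ℝ) < t := by positivity
  have hsR : (0:ℝ) < s := by positivity
  have hsRne : (s:ℝ) ≠ 0 := ne_of_gt hsR
  have hq0 : (0:ℝ) < ρ⁻¹ := by positivity
  have ha0 : (0:ℝ) < (a 0 : ℝ) := by exact_mod_cast lt_of_lt_of_le zero_lt_one (hZ.1 0).1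
  -- the transfer operator in coordinates
  set q : ℝ := ρ⁻¹ with hqdef
  set Tm : (Fin 2 → ℝ) → (Fin 2 → ℝ) :=
    fun ξ => ![q * ξ 0, ((κ:ℝ) * q) * ξ 0 + q * ξ 1] with hTm
  have hiter : ∀ (n : ℕ) (ξ : Fin 2 → ℝ),
      Tm^[n] ξ = ![q ^ n * ξ 0, q ^ n * ((n : ℝ) * (κ:ℝ) * ξ 0 + ξ 1)] := iterT q κ
  have hstep : ∀ ξ, ftMeasure μ (Tm ξ) = mask (digitR D) ξ * ftMeasure μ ξ := by
    intro ξ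
    have h := ft_step (Mupper ρ ρ c) (det_mupper ρ c hρne) (digitR D) μ hμ ξ
    rw [mupper_t_mulVec, hc] at h
    exact h
  -- additivity of the iterates
  have hTadd : ∀ (n : ℕ) (x y : Fin 2 → ℝ), Tm^[n] (x + y) = Tm^[n] x + Tm^[n] y := by
    intro n x y
    rw [hiter, hiter, hiter]
    funext l
    fin_cases l <;> simp <;> ring
  have hThom : ∀ n : ℕ, ∃ F : (Fin 2 → ℝ) →+ (Fin 2 → ℝ), ⇑F = Tm^[n] :=
    fun n => ⟨AddMonoidHom.mk' (fun ξ => Tm^[n] ξ) (hTadd n), rfl⟩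
  -- parameters of the construction
  set G : ℕ := κ.den * (p - 1) with hG
  have hG1 : 1 ≤ G := by
    rw [hG]
    exact Nat.one_le_iff_ne_zero.mpr (Nat.mul_ne_zero κ.den_nz (by omega))
  set E : ℕ → ℕ := fun k => r * G * (N - 1 - k) with hE
  set zeta : ℕ → (Fin 2 → ℝ) :=
    fun k => ![(t:ℝ)^(G*k) * (a 0 : ℝ) / p, (t:ℝ)^(G*k) * (a 1 : ℝ) / p] with hzeta
  set psi : ℕ → ℕ → (Fin 2 → ℝ) := fun j k =>
    ![(s:ℝ)^(G*(k-j)) * (t:ℝ)^(G*j) * (a 0 : ℝ) / p,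
      (s:ℝ)^(G*(k-j)) * (t:ℝ)^(G*j) *
        ((a 1 : ℝ) - (r:ℝ) * ((G*(k-j) : ℕ):ℝ) * (κ:ℝ) * (a 0 : ℝ)) / p] with hpsi
  set lam : ℕ → (Fin 2 → ℝ) := fun i => ∑ k ∈ Finset.range i, Tm^[E k] (zeta k) with hlam
  -- termwise factorization
  have hterm : ∀ j k, j ≤ k → k + 1 ≤ N → Tm^[E j] (psi j k) = Tm^[E k] (zeta k) := by
    intro j k hjk hkN
    have hm : E j = E k + r * (G*(k-j)) := by
      have h1 : N - 1 - j = (N - 1 - k) + (k - j) := by omega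
      simp only [hE]
      rw [h1, Nat.mul_add]
      ring
    have hGk : G * k = G * j + G * (k - j) := by
      rw [← Nat.mul_add]
      congr 1
      omega
    have hqpow : q ^ (E j) = q ^ (E k) * ((t:ℝ)^(G*(k-j)) / (s:ℝ)^(G*(k-j))) := by
      rw [hm, pow_add]
      congr 1
      rw [pow_mul, hρr, div_pow]
    have hcast : ((E j : ℕ):ℝ) = ((E k : ℕ):ℝ) + (r:ℝ) * ((G*(k-j) : ℕ):ℝ) := by
      rw [hm]; push_cast; ring
    rw [hiter, hiter]
    funext l
    fin_cases l
    · simp only [Fin.zero_eta, Matrix.cons_val_zero, hpsi, hzeta]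
      rw [hqpow, hGk, pow_add]
      field_simp
    · simp only [Fin.mk_one, Matrix.cons_val_one, Matrix.head_cons, Matrix.cons_val_zero, hpsi, hzeta]
      rw [hqpow, hGk, pow_add, hcast]
      field_simp
      ring
  -- the head term
  have hpsijj : ∀ j l, psi j j l = (t:ℝ)^(G*j) * (a l : ℝ) / p := by
    intro j l
    fin_cases l <;> simp [hpsi]
  -- integrality of the tail terms
  have hpsiint : ∀ j k l, j < k → ∃ z : ℤ, psi j k l = (z:ℝ) := by
    intro j k l hjk
    have hm1 : 1 ≤ G * (k - j) := by
      have : 1 ≤ k - j := by omega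
      calc 1 ≤ G := hG1
        _ = G * 1 := by ring
        _ ≤ G * (k - j) := Nat.mul_le_mul_left _ this
    have hsp2 : (s:ℝ) = (p:ℝ) * (s':ℝ) := by exact_mod_cast hs'
    have hspow : (s:ℝ)^(G*(k-j)) = (p:ℝ) * (s':ℝ) * (s:ℝ)^(G*(k-j) - 1) := by
      have h3 : (s:ℝ)^(G*(k-j)) = (s:ℝ)^(G*(k-j)-1) * (s:ℝ) := by
        rw [← pow_succ]
        congr 1
        omega
      rw [h3, hsp2]
      ring
    have hκden : ((κ.den:ℝ)) * (κ:ℝ) = (κ.num:ℝ) := by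
      have hd : ((κ.den:ℝ)) ≠ 0 := by
        exact_mod_cast κ.den_nz
      rw [Rat.cast_def]
      field_simp
    have hGm : ((G*(k-j) : ℕ):ℝ) * (κ:ℝ) = ((p-1)*(k-j) : ℕ) * (κ.num:ℝ) := by
      rw [hG]
      push_cast
      calc ((κ.den:ℝ)) * ((p-1:ℕ):ℝ) * ((k-j:ℕ):ℝ) * (κ:ℝ)
          = ((κ.den:ℝ) * (κ:ℝ)) * (((p-1:ℕ):ℝ) * ((k-j:ℕ):ℝ)) := by ring
        _ = (κ.num:ℝ) * (((p-1:ℕ):ℝ) * ((k-j:ℕ):ℝ)) := by rw [hκden]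
        _ = ((p-1:ℕ):ℝ) * ((k-j:ℕ):ℝ) * (κ.num:ℝ) := by ring
    fin_cases l
    · refine ⟨(s':ℤ) * (s:ℤ)^(G*(k-j) - 1) * (t:ℤ)^(G*j) * (a 0), ?_⟩
      simp only [hpsi, Matrix.cons_val_zero]
      rw [hspow]
      push_cast
      field_simp
    · refine ⟨(s':ℤ) * (s:ℤ)^(G*(k-j) - 1) * (t:ℤ)^(G*j) *
        ((a 1) - (r:ℤ) * ((p-1)*(k-j) : ℕ) * κ.num * (a 0)), ?_⟩
      simp only [hpsi, Matrix.cons_val_one, Matrix.head_cons]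
      rw [hspow, show (r:ℝ) * ((G*(k-j) : ℕ):ℝ) * (κ:ℝ) * (a 0 : ℝ)
        = (r:ℝ) * (((G*(k-j) : ℕ):ℝ) * (κ:ℝ)) * (a 0 : ℝ) by ring, hGm]
      push_cast
      field_simp
  -- the difference identity and the Z-form of Q
  have hQ : ∀ j i, j < i → i ≤ N →
      lam i - lam j = Tm^[E j] (∑ k ∈ Finset.Ico j i, psi j k) ∧
      ∃ K : Fin 2 → ℤ, ∀ l, (∑ k ∈ Finset.Ico j i, psi j k) l
        = (a l : ℝ)/p + ((K l : ℤ):ℝ) := by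
    intro j i hji hiN
    constructor
    · have h1 : lam i - lam j = ∑ k ∈ Finset.Ico j i, Tm^[E k] (zeta k) := by
        rw [hlam]
        simp only
        rw [Finset.sum_Ico_eq_sub _ (le_of_lt hji)]
      have h2 : ∑ k ∈ Finset.Ico j i, Tm^[E k] (zeta k)
          = ∑ k ∈ Finset.Ico j i, Tm^[E j] (psi j k) := by
        refine Finset.sum_congr rfl fun k hk => ?_
        rw [Finset.mem_Ico] at hk
        exact (hterm j k hk.1 (by omega)).symm
      obtain ⟨F, hF⟩ := hThom (E j)
      rw [h1, h2, ← hF, ← map_sum]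
    · -- build the integer vector
      have hdvd : (p - 1) ∣ G := ⟨κ.den, by rw [hG]; ring⟩
      obtain ⟨tz, htz⟩ := fermat_pow p t G j hp htp hdvd
      have hchoice : ∃ zf : Fin 2 → ℕ → ℤ, ∀ (l : Fin 2), ∀ k ∈ Finset.Ico (j+1) i,
          psi j k l = ((zf l k : ℤ):ℝ) := by
        choose zf hzf using fun (l : Fin 2) k (hk : j < k) => hpsiint j k l hk
        refine ⟨fun l k => if hk : j < k then zf l k hk else 0, fun l k hk => ?_⟩
        rw [Finset.mem_Ico] at hk
        have hjk : j < k := by omega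
        simp only [dif_pos hjk]
        exact hzf l k hjk
      obtain ⟨zf, hzf⟩ := hchoice
      refine ⟨fun l => tz * a l + ∑ k ∈ Finset.Ico (j+1) i, zf l k, fun l => ?_⟩
      have hsplit : ∀ l : Fin 2, (∑ k ∈ Finset.Ico j i, psi j k) l
          = psi j j l + ∑ k ∈ Finset.Ico (j+1) i, psi j k l := by
        intro l
        rw [Finset.sum_apply]
        rw [Finset.sum_eq_sum_Ico_succ_bot hji]
      have hhead : ∀ l, psi j j l = (a l : ℝ)/p + ((tz * a l : ℤ):ℝ) := by
        intro l
        rw [hpsijj]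
        have htzR : ((t:ℝ))^(G*j) = ((1:ℝ) + (p:ℝ) * (tz:ℝ)) := by
          exact_mod_cast htz
        rw [htzR]
        push_cast
        field_simp
      rw [hsplit l, hhead l, Finset.sum_congr rfl (hzf l)]
      push_cast
      ring
  -- strict monotonicity of first coordinates
  have hmono : StrictMono (fun i => lam i 0) := by
    apply strictMono_nat_of_lt_succ
    intro n
    have h1 : lam (n+1) 0 = lam n 0 + (Tm^[E n] (zeta n)) 0 := by
      rw [hlam]
      simp only
      rw [Finset.sum_range_succ]
      rfl
    have h2 : (Tm^[E n] (zeta n)) 0 = q ^ (E n) * ((t:ℝ)^(G*n) * (a 0 : ℝ) / p) := by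
      rw [hiter]
      simp [hzeta]
    have h3 : (0:ℝ) < q ^ (E n) * ((t:ℝ)^(G*n) * (a 0 : ℝ) / p) := by positivity
    rw [h1, h2]
    linarith
  have hinj : Function.Injective lam := fun x y hxy => hmono.injective (by rw [hxy])
  -- the orthogonal set
  refine ⟨(Finset.range N).image lam, ?_, ?_⟩
  · intro l hl l' hl' hne
    simp only [Finset.coe_image, Set.mem_image, Finset.mem_coe, Finset.mem_range] at hl hl'
    obtain ⟨i, hiN, rfl⟩ := hl
    obtain ⟨i', hi'N, rfl⟩ := hl'
    have hii' : i ≠ i' := fun h => hne (by rw [h])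
    -- key vanishing for ordered pairs
    have main : ∀ j i'', j < i'' → i'' < N → ftMeasure μ (lam i'' - lam j) = 0 ∧
        ftMeasure μ (lam j - lam i'') = 0 := by
      intro j i'' hji hiN2
      obtain ⟨hdiff, K, hK⟩ := hQ j i'' hji (le_of_lt hiN2)
      set Q := ∑ k ∈ Finset.Ico j i'', psi j k with hQdef
      have hEj : 1 ≤ E j := by
        have : 1 ≤ N - 1 - j := by omega
        calc 1 ≤ r * G := Nat.one_le_iff_ne_zero.mpr (by positivity)
          _ = r * G * 1 := by ring
          _ ≤ r * G * (N - 1 - j) := Nat.mul_le_mul_left _ this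
      have hmaskQ : mask (digitR D) Q = 0 := by
        apply (hZ.2 Q).mpr
        exact ⟨1, le_refl 1, by omega, K, fun l => by
          rw [hK l]; push_cast; ring⟩
      have hmasknQ : mask (digitR D) (-Q) = 0 := by
        apply (hZ.2 (-Q)).mpr
        refine ⟨p - 1, by omega, le_refl _, fun l => -(K l) - a l, fun l => ?_⟩
        rw [Pi.neg_apply, hK l]
        have : ((p - 1 : ℕ):ℝ) = (p:ℝ) - 1 := by
          push_cast [Nat.cast_sub (by omega : 1 ≤ p)]
          ring
        rw [this]
        push_cast
        field_simp
        ring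
      have hfwd : ftMeasure μ (lam i'' - lam j) = 0 := by
        rw [hdiff, show E j = (E j - 1) + 1 by omega]
        exact ft_iter_zero hstep hmaskQ (E j - 1)
      have hbwd : ftMeasure μ (lam j - lam i'') = 0 := by
        have hneg : lam j - lam i'' = Tm^[E j] (-Q) := by
          obtain ⟨F, hF⟩ := hThom (E j)
          rw [show lam j - lam i'' = -(lam i'' - lam j) by ring, hdiff, ← hF, ← map_neg]
        rw [hneg, show E j = (E j - 1) + 1 by omega]
        exact ft_iter_zero hstep hmasknQ (E j - 1)
      exact ⟨hfwd, hbwd⟩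
    rcases lt_or_gt_of_ne hii' with hlt | hgt
    · exact (main i i' hlt hi'N).2
    · exact (main i' i hgt hiN).1
  · rw [Finset.card_image_of_injective _ hinj, Finset.card_range]

end
end

section
/- Let c₁, c₂ be integers with gcd(c₁, c₂) = 1 such that c₁/c₂ ∈ ℚ ∖ E_a, and set B = {c₂·d_{i,1} + c₁·d_{i,2} : 0 ≤ i ≤ p−1}. Then B is a complete residue system modulo p (i.e., the reductions of its elements modulo p are exactly {0, 1, …, p−1}) and the greatest common divisor of the elements of B is 1. -/
open MeasureTheory Complex Matrix
open scoped ENNReal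

noncomputable section

lemma zeta_prim (p : ℕ) (hp : p ≠ 0) :
    IsPrimitiveRoot (Complex.exp ((-2 * Real.pi * Complex.I) / p)) p := by
  have h := Complex.isPrimitiveRoot_exp p hp
  have e : Complex.exp ((-2 * Real.pi * Complex.I) / p)
      = (Complex.exp (2 * Real.pi * Complex.I / p))⁻¹ := by
    rw [← Complex.exp_neg]; ring_nf
  rw [e]; exact h.inv

lemma zeta_geom {p : ℕ} (hp : p.Prime) {ζ : ℂ} (hζ : IsPrimitiveRoot ζ p) (m : ℤ) :
    ∑ j ∈ Finset.range p, (ζ ^ m) ^ j = if (p : ℤ) ∣ m then (p : ℂ) else 0 := by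
  by_cases hd : (p : ℤ) ∣ m
  · rw [if_pos hd, (hζ.zpow_eq_one_iff_dvd m).mpr hd]
    simp
  · have hne : ζ ^ m ≠ 1 := fun h => hd ((hζ.zpow_eq_one_iff_dvd m).mp h)
    rw [if_neg hd, geom_sum_eq hne]
    have : (ζ ^ m) ^ p = 1 := by
      rw [← zpow_natCast, ← _root_.zpow_mul, mul_comm, _root_.zpow_mul, zpow_natCast, hζ.pow_eq_one, _root_.one_zpow]
    rw [this, sub_self, zero_div]

lemma zeta_mod {p : ℕ} (hp : p ≠ 0) {ζ : ℂ} (hζ : IsPrimitiveRoot ζ p) (n : ℤ) :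
    ζ ^ n = ζ ^ (((n : ZMod p)).val : ℤ) := by
  haveI : NeZero p := ⟨hp⟩
  have hd : (p : ℤ) ∣ n - ((n : ZMod p).val : ℤ) := by
    rw [← ZMod.intCast_zmod_eq_zero_iff_dvd]
    push_cast [ZMod.natCast_val, ZMod.cast_id]
    ring
  have h1 : ζ ^ (n - ((n : ZMod p).val : ℤ)) = 1 := (hζ.zpow_eq_one_iff_dvd _).mpr hd
  have hz : ζ ≠ 0 := fun h0 => by
    have := hζ.pow_eq_one
    rw [h0, zero_pow hp] at this
    exact zero_ne_one this
  calc ζ ^ n = ζ ^ (((n : ZMod p).val : ℤ) + (n - ((n : ZMod p).val : ℤ))) := by ring_nf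
  _ = ζ ^ (((n : ZMod p)).val : ℤ) := by rw [zpow_add₀ hz, h1, mul_one]

lemma zeta_ne_zero {p : ℕ} (hp : p ≠ 0) {ζ : ℂ} (hζ : IsPrimitiveRoot ζ p) : ζ ≠ 0 :=
  fun h0 => by
    have := hζ.pow_eq_one
    rw [h0, zero_pow hp] at this
    exact zero_ne_one this

lemma sum_zeta_of_bij {p : ℕ} (hp : p.Prime) {ζ : ℂ} (hζ : IsPrimitiveRoot ζ p)
    (L : Fin p → ℤ) (hbij : Function.Bijective (fun i : Fin p => ((L i : ZMod p)))) :
    ∑ i : Fin p, ζ ^ (L i) = 0 := by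
  haveI : NeZero p := ⟨hp.ne_zero⟩
  have he : Function.Bijective (fun i : Fin p => ((i : ℕ) : ZMod p)) := by
    rw [Fintype.bijective_iff_injective_and_card]
    refine ⟨fun i i' h => ?_, by simp [ZMod.card]⟩
    simp only at h
    have : (((i : ℕ) : ZMod p)).val = (((i' : ℕ) : ZMod p)).val := by rw [h]
    rwa [ZMod.val_cast_of_lt i.isLt, ZMod.val_cast_of_lt i'.isLt, Fin.val_eq_val] at this
  calc ∑ i : Fin p, ζ ^ (L i)
      = ∑ i : Fin p, (fun x : ZMod p => ζ ^ (x.val : ℤ)) ((L i : ZMod p)) := by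
        refine Finset.sum_congr rfl fun i _ => ?_
        exact zeta_mod hp.ne_zero hζ (L i)
    _ = ∑ x : ZMod p, ζ ^ (x.val : ℤ) := Fintype.sum_bijective _ hbij _ _ (fun i => rfl)
    _ = ∑ i : Fin p, (fun x : ZMod p => ζ ^ (x.val : ℤ)) (((i : ℕ) : ZMod p)) :=
        (Fintype.sum_bijective _ he _ _ (fun i => rfl)).symm
    _ = ∑ i : Fin p, ζ ^ (i : ℕ) := by
        refine Finset.sum_congr rfl fun i _ => ?_
        simp only [ZMod.val_cast_of_lt i.isLt, zpow_natCast]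
    _ = ∑ j ∈ Finset.range p, ζ ^ j := Fin.sum_univ_eq_sum_range _ _
    _ = 0 := hζ.geom_sum_eq_zero hp.one_lt

lemma crs_of_sums {p : ℕ} (hp : p.Prime) {ζ : ℂ} (hζ : IsPrimitiveRoot ζ p)
    (L : Fin p → ℤ)
    (hsum : ∀ j : ℕ, 1 ≤ j → j ≤ p - 1 → ∑ i : Fin p, ζ ^ ((j : ℤ) * L i) = 0) :
    Function.Bijective (fun i : Fin p => ((L i : ZMod p))) := by
  haveI : NeZero p := ⟨hp.ne_zero⟩
  have hz : ζ ≠ 0 := zeta_ne_zero hp.ne_zero hζ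
  rw [Fintype.bijective_iff_surjective_and_card]
  refine ⟨?_, by simp [ZMod.card]⟩
  intro r
  have key : ∑ i : Fin p, (if (p:ℤ) ∣ (L i - (r.val:ℤ)) then (p:ℂ) else 0) = p := by
    calc ∑ i : Fin p, (if (p:ℤ) ∣ (L i - (r.val:ℤ)) then (p:ℂ) else 0)
        = ∑ i : Fin p, ∑ j ∈ Finset.range p, (ζ ^ (L i - (r.val:ℤ))) ^ j := by
          refine Finset.sum_congr rfl fun i _ => ?_
          exact (zeta_geom hp hζ _).symm
      _ = ∑ j ∈ Finset.range p, ∑ i : Fin p, (ζ ^ (L i - (r.val:ℤ))) ^ j := Finset.sum_comm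
      _ = ∑ j ∈ Finset.range p, ζ ^ (-(j:ℤ) * (r.val:ℤ)) * ∑ i : Fin p, ζ ^ ((j:ℤ) * L i) := by
          refine Finset.sum_congr rfl fun j _ => ?_
          rw [Finset.mul_sum]
          refine Finset.sum_congr rfl fun i _ => ?_
          rw [← zpow_natCast (ζ ^ (L i - (r.val:ℤ))), ← _root_.zpow_mul, ← zpow_add₀ hz]
          congr 1
          ring
      _ = (p:ℂ) := by
          rw [Finset.sum_eq_single_of_mem 0 (Finset.mem_range.mpr hp.pos)]
          · simp
          · intro j hj hj0
            rw [hsum j (Nat.one_le_iff_ne_zero.mpr hj0)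
              (Nat.le_sub_one_of_lt (Finset.mem_range.mp hj)), mul_zero]
  by_contra hno
  push_neg at hno
  have : ∀ i : Fin p, ¬ ((p:ℤ) ∣ (L i - (r.val:ℤ))) := by
    intro i hdvd
    apply hno i
    have : ((L i - (r.val:ℤ) : ℤ) : ZMod p) = 0 := (ZMod.intCast_zmod_eq_zero_iff_dvd _ p).mpr hdvd
    push_cast at this
    rw [sub_eq_zero] at this
    rw [this, ZMod.natCast_val, ZMod.cast_id]
  rw [Finset.sum_congr rfl (fun i _ => if_neg (this i)), Finset.sum_const, smul_zero] at key
  exact (Nat.cast_ne_zero.mpr hp.ne_zero) key.symm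

lemma mask_formula {p : ℕ} (D : Fin p → (Fin 2 → ℤ)) (v : Fin 2 → ℤ) (N : ℕ)
    (ξ : Fin 2 → ℝ) (hξ : ∀ i, ξ i = (v i : ℝ) / N) :
    mask (digitR D) ξ = (p : ℂ)⁻¹ * ∑ i : Fin p,
      (Complex.exp ((-2 * Real.pi * Complex.I) / N)) ^ (v 0 * D i 0 + v 1 * D i 1) := by
  unfold mask expChar digitR
  congr 1
  refine Finset.sum_congr rfl fun i _ => ?_
  rw [← Complex.exp_int_mul]
  congr 1
  rw [hξ 0, hξ 1]
  push_cast
  ring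

/-- Lemma 2.9: if `c₁/c₂ ∈ ℚ ∖ E_a` with `gcd(c₁,c₂)=1`, then
`B = {c₂d_{i,1} + c₁d_{i,2} : 0 ≤ i ≤ p−1}` is a complete residue system mod `p`
and `gcd(B) = 1`. -/
theorem stmt9 (p : ℕ) (hp : p.Prime)
    (D : Fin p → (Fin 2 → ℤ)) (hD : Function.Injective D)
    (a : Fin 2 → ℤ) (hZ : ZeroSetCond p D a)
    (c₁ c₂ : ℤ) (hc₁c₂ : Int.gcd c₁ c₂ = 1)
    (hnE : ((c₁ : ℝ) / (c₂ : ℝ)) ∉ Ea p a) :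
    Function.Bijective (fun i : Fin p => ((c₂ * D i 0 + c₁ * D i 1 : ℤ) : ZMod p)) ∧
      Finset.univ.gcd (fun i : Fin p => c₂ * D i 0 + c₁ * D i 1) = 1 := by
  classical
  haveI : Fact p.Prime := ⟨hp⟩
  haveI : NeZero p := ⟨hp.ne_zero⟩
  have hpC : ((p:ℂ)) ≠ 0 := Nat.cast_ne_zero.mpr hp.ne_zero
  have hc₂ : c₂ ≠ 0 := by
    rintro rfl
    exact hnE (Or.inr (by simp))
  have hc₁ : c₁ ≠ 0 := by
    rintro rfl
    exact hnE (Or.inr (by simp))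
  have hpa : (p : ℤ) ∣ (c₂ * a 1 - c₁ * a 0) := by
    by_contra h
    exact hnE (Or.inl ⟨c₁, c₂, hc₁c₂, h, rfl⟩)
  have hpnda : ∀ i, ¬ ((p:ℤ) ∣ a i) := by
    intro i hdvd
    have h1 := (hZ.1 i).1
    have h2 := (hZ.1 i).2
    have := Int.le_of_dvd (by omega) hdvd
    omega
  have hpc₁ : ¬ ((p:ℤ) ∣ c₁) := by
    intro hdvd
    have h1 : (p:ℤ) ∣ c₂ * a 1 := by
      have h2 : c₂ * a 1 = (c₂ * a 1 - c₁ * a 0) + c₁ * a 0 := by ring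
      rw [h2]
      exact dvd_add hpa (Dvd.dvd.mul_right hdvd _)
    rcases ((Nat.prime_iff_prime_int.mp hp).dvd_mul.mp h1) with h | h
    · have : (p:ℤ) ∣ Int.gcd c₁ c₂ := Int.dvd_coe_gcd hdvd h
      rw [hc₁c₂] at this
      have := Int.le_of_dvd one_pos this
      have := hp.two_le
      omega
    · exact hpnda 1 h
  -- the primitive root
  set ζ : ℂ := Complex.exp ((-2 * Real.pi * Complex.I) / p) with hζdef
  have hζ : IsPrimitiveRoot ζ p := zeta_prim p hp.ne_zero
  -- L is a complete residue system
  set L : Fin p → ℤ := fun i => a 0 * D i 0 + a 1 * D i 1 with hLdef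
  have hsum : ∀ j : ℕ, 1 ≤ j → j ≤ p - 1 → ∑ i : Fin p, ζ ^ ((j : ℤ) * L i) = 0 := by
    intro j hj1 hj2
    have hmask : mask (digitR D) (fun i => (((j : ℤ) * a i : ℤ) : ℝ) / (p : ℕ)) = 0 := by
      apply (hZ.2 _).mpr
      refine ⟨j, hj1, hj2, 0, fun i => ?_⟩
      simp only [Pi.zero_apply, Int.cast_zero]
      push_cast
      ring
    rw [mask_formula D (fun i => (j : ℤ) * a i) p _ (fun i => rfl)] at hmask
    have h0 := (mul_eq_zero.mp hmask).resolve_left (inv_ne_zero hpC)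
    calc ∑ i : Fin p, ζ ^ ((j:ℤ) * L i)
        = ∑ i : Fin p, ζ ^ ((j : ℤ) * a 0 * D i 0 + (j : ℤ) * a 1 * D i 1) := by
          refine Finset.sum_congr rfl fun i _ => ?_
          congr 1
          simp only [hLdef]
          ring
      _ = 0 := h0
  have hLbij := crs_of_sums hp hζ L hsum
  -- B is a complete residue system
  set B : Fin p → ℤ := fun i => c₂ * D i 0 + c₁ * D i 1 with hBdef
  have ha1 : ((a 1 : ℤ) : ZMod p) ≠ 0 := by
    rw [Ne, ZMod.intCast_zmod_eq_zero_iff_dvd]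
    exact hpnda 1
  have hc1z : ((c₁ : ℤ) : ZMod p) ≠ 0 := by
    rw [Ne, ZMod.intCast_zmod_eq_zero_iff_dvd]
    exact hpc₁
  have hrel0 : ((c₂ : ZMod p)) * (a 1 : ZMod p) = (c₁ : ZMod p) * (a 0 : ZMod p) := by
    have h0 : ((c₂ * a 1 - c₁ * a 0 : ℤ) : ZMod p) = 0 :=
      (ZMod.intCast_zmod_eq_zero_iff_dvd _ _).mpr hpa
    push_cast at h0
    linear_combination h0
  have hu : ((a 1 : ZMod p))⁻¹ * (c₁ : ZMod p) ≠ 0 :=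
    mul_ne_zero (inv_ne_zero ha1) hc1z
  have hrel : (fun i : Fin p => ((B i : ℤ) : ZMod p))
      = (fun x => ((a 1 : ZMod p))⁻¹ * (c₁ : ZMod p) * x) ∘ (fun i : Fin p => ((L i : ZMod p))) := by
    funext i
    have hm : (a 1 : ZMod p) * ((B i : ℤ) : ZMod p) = (c₁ : ZMod p) * ((L i : ℤ) : ZMod p) := by
      simp only [hBdef, hLdef]
      push_cast
      linear_combination ((D i 0 : ZMod p)) * hrel0
    have := congrArg (fun x => ((a 1 : ZMod p))⁻¹ * x) hm
    rw [← mul_assoc, inv_mul_cancel₀ ha1, one_mul] at this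
    rw [this]
    simp [Function.comp, mul_assoc]
  have hBbij : Function.Bijective (fun i : Fin p => ((B i : ℤ) : ZMod p)) := by
    rw [hrel]
    exact (Equiv.mulLeft₀ _ hu).bijective.comp hLbij
  refine ⟨hBbij, ?_⟩
  -- the gcd part
  set g : ℤ := Finset.univ.gcd B with hgdef
  have hgdvd : ∀ i, g ∣ B i := fun i => Finset.gcd_dvd (Finset.mem_univ i)
  have hgnonneg : 0 ≤ g := Int.nonneg_of_normalize_eq_self Finset.normalize_gcd
  have hnotconst : ¬ (∀ i : Fin p, ((B i : ℤ) : ZMod p) = 0) := by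
    intro hall
    have h01 : ((0 : Fin p) : Fin p) ≠ (⟨1, hp.one_lt⟩ : Fin p) := by
      intro h
      have := congrArg Fin.val h
      simp at this
    exact h01 (hBbij.1 (by simp only [hall]))
  have hg0 : g ≠ 0 := by
    intro h0
    apply hnotconst
    intro i
    have : B i = 0 := by
      have := Finset.gcd_eq_zero_iff.mp (hgdef ▸ h0) i (Finset.mem_univ i)
      exact this
    rw [this]
    simp
  have hpg : ¬ ((p:ℤ) ∣ g) := by
    intro hdvd
    apply hnotconst
    intro i
    rw [ZMod.intCast_zmod_eq_zero_iff_dvd]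
    exact dvd_trans hdvd (hgdvd i)
  set n : ℕ := g.toNat with hndef
  have hng : (n : ℤ) = g := Int.toNat_of_nonneg hgnonneg
  have hn0 : n ≠ 0 := by
    intro h
    rw [h] at hng
    exact hg0 hng.symm
  have hpn : ¬ (p ∣ n) := by
    intro h
    apply hpg
    rw [← hng]
    exact_mod_cast Int.natCast_dvd_natCast.mpr h
  -- C = B / n
  set C : Fin p → ℤ := fun i => B i / (n : ℤ) with hCdef
  have hBC : ∀ i, B i = (n : ℤ) * C i := by
    intro i
    rw [hCdef]
    exact (Int.mul_ediv_cancel' (hng ▸ hgdvd i)).symm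
  have hnz : ((n : ℕ) : ZMod p) ≠ 0 := by
    rw [Ne, ZMod.natCast_eq_zero_iff]
    exact hpn
  have hCbij : Function.Bijective (fun i : Fin p => ((C i : ℤ) : ZMod p)) := by
    have hrel2 : (fun i : Fin p => ((C i : ℤ) : ZMod p))
        = (fun x => (((n : ℕ) : ZMod p))⁻¹ * x) ∘ (fun i : Fin p => ((B i : ℤ) : ZMod p)) := by
      funext i
      simp only [Function.comp]
      rw [hBC i]
      push_cast
      rw [← mul_assoc, inv_mul_cancel₀ hnz, one_mul]
    rw [hrel2]
    exact (Equiv.mulLeft₀ _ (inv_ne_zero hnz)).bijective.comp hBbij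
  -- the mask vanishes at ((c₂, c₁) / (p n))
  set w : Fin 2 → ℤ := fun i => if i = 0 then c₂ else c₁ with hwdef
  have hmask2 : mask (digitR D) (fun i => ((w i : ℤ) : ℝ) / ((p * n : ℕ) : ℝ)) = 0 := by
    rw [mask_formula D w (p * n) _ (fun i => rfl)]
    have hbase : (Complex.exp ((-2 * Real.pi * Complex.I) / ((p * n : ℕ) : ℂ))) ^ ((n : ℤ))
        = ζ := by
      rw [zpow_natCast, ← Complex.exp_nat_mul, hζdef]
      congr 1
      have hnC : ((n:ℂ)) ≠ 0 := Nat.cast_ne_zero.mpr hn0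
      push_cast
      field_simp
    have hterm : ∀ i : Fin p,
        (Complex.exp ((-2 * Real.pi * Complex.I) / ((p * n : ℕ) : ℂ))) ^ (w 0 * D i 0 + w 1 * D i 1)
        = ζ ^ (C i) := by
      intro i
      have hwB : w 0 * D i 0 + w 1 * D i 1 = (n : ℤ) * C i := by
        have h0 : w 0 = c₂ := by simp [hwdef]
        have h1 : w 1 = c₁ := by simp [hwdef]
        rw [h0, h1, ← hBC i]
      rw [hwB, _root_.zpow_mul, hbase]
    rw [Finset.sum_congr rfl (fun i _ => hterm i), sum_zeta_of_bij hp hζ C hCbij, mul_zero]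
  obtain ⟨j, hj1, hj2, k, hk⟩ := (hZ.2 _).mp hmask2
  -- extract divisibility
  have hdvdc : ∀ (i : Fin 2), (n : ℤ) ∣ w i := by
    intro i
    have e := hk i
    have hpR : ((p:ℝ)) ≠ 0 := Nat.cast_ne_zero.mpr hp.ne_zero
    have hnR : ((n:ℝ)) ≠ 0 := Nat.cast_ne_zero.mpr hn0
    have e2 : ((w i : ℤ) : ℝ) = (((j:ℤ) * a i * (n:ℤ) + k i * ((p:ℤ) * (n:ℤ)) : ℤ) : ℝ) := by
      push_cast at e ⊢
      field_simp at e
      have e4 : ((w i : ℤ) : ℝ) * p = ((j:ℝ) * (a i : ℝ) * (n:ℝ) + (k i : ℝ) * ((p:ℝ) * (n:ℝ))) * p := by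
        rw [e]; ring
      exact mul_right_cancel₀ hpR e4
    have e3 : (w i : ℤ) = (j:ℤ) * a i * (n:ℤ) + k i * ((p:ℤ) * (n:ℤ)) := by
      exact_mod_cast e2
    exact ⟨(j:ℤ) * a i + k i * (p:ℤ), by rw [e3]; ring⟩
  have hd2 : (n : ℤ) ∣ c₂ := by
    have h := hdvdc 0
    rwa [show w 0 = c₂ from by simp [hwdef]] at h
  have hd1 : (n : ℤ) ∣ c₁ := by
    have h := hdvdc 1
    rwa [show w 1 = c₁ from by simp [hwdef]] at h
  have : (n : ℤ) ∣ (Int.gcd c₁ c₂ : ℤ) := Int.dvd_coe_gcd hd1 hd2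
  rw [hc₁c₂] at this
  have hn1 : (n : ℤ) = 1 := by
    have h1 := Int.le_of_dvd one_pos this
    have h2 : (1:ℤ) ≤ n := by
      omega
    omega
  rw [← hng]
  exact_mod_cast hn1


end
end

section
/- Suppose ρ₁ = ρ₂ = ρ with ρ⁻¹ = t an integer divisible by p. Let λ₁ ∈ L_{i₁} and λ₂ ∈ L_{i₂} for positive integers i₁, i₂, and suppose λ₂ − λ₁ lies in the zero set of μ̂_{M,D}, say λ₂ − λ₁ ∈ L_i for some positive integer i. Then: if i₁ ≠ i₂, necessarily i = min{i₁, i₂}; if i₁ = i₂, necessarily i ≥ i₁. -/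
open MeasureTheory Complex Matrix
open scoped ENNReal

noncomputable section

/-!
Only first coordinates matter: `Mᵀ` is lower triangular with diagonal `t`, so every `ξ ∈ L_n`
has `ξ₀ = tⁿ B / p` with `p ∤ B`. The relation `λ₂ - λ₁ ∈ L_i` thus becomes
`tⁱ B = t^{i₂} B₂ - t^{i₁} B₁` in `ℤ`, and since `p ∣ t` the least of the exponents `i, i₁, i₂`
must be attained at least twice.
-/

section Valuation

variable {R : Type*} [CommRing R] [IsDomain R] {p t : R}

lemma min_le_of_pow_mul_eq_add (hpt : p ∣ t) (ht : t ≠ 0) {m n k : ℕ} {x y z : R}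
    (hx : ¬ p ∣ x) (h : t ^ m * x = t ^ n * y + t ^ k * z) : min n k ≤ m := by
  by_contra! hlt
  have hn : m < n := (min_le_left n k).trans_lt' hlt
  have hk : m < k := (min_le_right n k).trans_lt' hlt
  have hx_eq : x = t ^ (n - m) * y + t ^ (k - m) * z := by
    apply mul_left_cancel₀ (pow_ne_zero m ht)
    rw [h, mul_add, ← mul_assoc, ← mul_assoc, ← pow_add, ← pow_add,
      Nat.add_sub_cancel' hn.le, Nat.add_sub_cancel' hk.le]
  refine hx (hx_eq ▸ dvd_add ?_ ?_) <;>
    exact (dvd_pow hpt (Nat.sub_ne_zero_of_lt ‹_›)).mul_right _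

lemma eq_min_and_le_of_pow_mul_eq_sub (hpt : p ∣ t) (ht : t ≠ 0) {i i₁ i₂ : ℕ} {B B₁ B₂ : R}
    (hB : ¬ p ∣ B) (hB₁ : ¬ p ∣ B₁) (hB₂ : ¬ p ∣ B₂)
    (h : t ^ i * B = t ^ i₂ * B₂ - t ^ i₁ * B₁) :
    (i₁ ≠ i₂ → i = min i₁ i₂) ∧ (i₁ = i₂ → i₁ ≤ i) := by
  have hi : min i₂ i₁ ≤ i :=
    min_le_of_pow_mul_eq_add hpt ht hB (y := B₂) (z := -B₁) (by linear_combination h)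
  have hi₁ : min i₂ i ≤ i₁ :=
    min_le_of_pow_mul_eq_add hpt ht hB₁ (y := B₂) (z := -B) (by linear_combination h)
  have hi₂ : min i i₁ ≤ i₂ :=
    min_le_of_pow_mul_eq_add hpt ht hB₂ (y := B) (z := B₁) (by linear_combination -h)
  omega

end Valuation

lemma Matrix.mulVec_pow_apply_zero {R : Type*} [CommSemiring R] {A : Matrix (Fin 2) (Fin 2) R}
    (hA : A 0 1 = 0) (n : ℕ) (v : Fin 2 → R) : (A ^ n *ᵥ v) 0 = A 0 0 ^ n * v 0 := by
  induction n with
  | zero => simp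
  | succ n ih =>
    rw [pow_succ', ← mulVec_mulVec, mulVec, dotProduct, Fin.sum_univ_two, hA, ih]
    ring

lemma not_dvd_mul_add_mul {p : ℕ} (hp : p.Prime) {j : ℕ} (hj₁ : 1 ≤ j) (hj₂ : j ≤ p - 1)
    {a : ℤ} (ha₁ : 1 ≤ a) (ha₂ : a ≤ (p : ℤ) - 1) (k : ℤ) : ¬ (p : ℤ) ∣ j * a + p * k := by
  rw [dvd_add_left (dvd_mul_right _ _)]
  intro hdvd
  rcases (Nat.prime_iff_prime_int.mp hp).dvd_or_dvd hdvd with hj | ha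
  · have := Int.le_of_dvd (by omega) hj
    omega
  · have := Int.le_of_dvd (by omega) ha
    omega

lemma ZeroSetCond.exists_apply_zero_eq {p : ℕ} (hp : p.Prime) {D : Fin p → (Fin 2 → ℤ)}
    {a : Fin 2 → ℤ} (hZ : ZeroSetCond p D a) {η : Fin 2 → ℝ} (hη : mask (digitR D) η = 0) :
    ∃ B : ℤ, ¬ (p : ℤ) ∣ B ∧ η 0 = B / p := by
  obtain ⟨j, hj₁, hj₂, k, hk⟩ := (hZ.2 η).mp hη
  refine ⟨j * a 0 + p * k 0, not_dvd_mul_add_mul hp hj₁ hj₂ (hZ.1 0).1 (hZ.1 0).2 _, ?_⟩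
  have : (p : ℝ) ≠ 0 := Nat.cast_ne_zero.mpr hp.ne_zero
  rw [hk 0]
  push_cast
  field_simp

lemma exists_mulVec_pow_mupper_apply_zero {p : ℕ} (hp : p.Prime) {D : Fin p → (Fin 2 → ℤ)}
    {a : Fin 2 → ℤ} (hZ : ZeroSetCond p D a) {ρ : ℝ} {t : ℤ} (ht : ρ⁻¹ = t) (c : ℝ)
    {η : Fin 2 → ℝ} (hη : mask (digitR D) η = 0) (n : ℕ) :
    ∃ B : ℤ, ¬ (p : ℤ) ∣ B ∧ (((Mupper ρ ρ c)ᵀ ^ n) *ᵥ η) 0 = t ^ n * B / p := by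
  obtain ⟨B, hB, hη0⟩ := hZ.exists_apply_zero_eq hp hη
  refine ⟨B, hB, ?_⟩
  rw [Matrix.mulVec_pow_apply_zero rfl, hη0]
  simp only [Mupper, transpose_apply, of_apply, cons_val', cons_val_zero, empty_val',
    cons_val_fin_one, ht]
  ring

theorem stmt17_general (p : ℕ) (hp : p.Prime) (ρ c : ℝ) (hρ0 : 0 < ρ)
    (D : Fin p → (Fin 2 → ℤ))
    (a : Fin 2 → ℤ) (hZ : ZeroSetCond p D a)
    (t : ℤ) (ht : ρ⁻¹ = (t : ℝ)) (hpt : (p : ℤ) ∣ t)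
    (L : ℕ → Set (Fin 2 → ℝ))
    (hL : ∀ i, L i = {ξ | ∃ η, mask (digitR D) η = 0 ∧ ξ = ((Mupper ρ ρ c)ᵀ ^ i).mulVec η})
    (i₁ i₂ i : ℕ)
    (lam₁ lam₂ : Fin 2 → ℝ) (hlam₁ : lam₁ ∈ L i₁) (hlam₂ : lam₂ ∈ L i₂)
    (hdiff : lam₂ - lam₁ ∈ L i) :
    (i₁ ≠ i₂ → i = min i₁ i₂) ∧ (i₁ = i₂ → i₁ ≤ i) := by
  have first_coord : ∀ n, ∀ ξ ∈ L n, ∃ B : ℤ, ¬ (p : ℤ) ∣ B ∧ ξ 0 = t ^ n * B / p := by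
    intro n ξ hξ
    rw [hL n] at hξ
    obtain ⟨η, hη, rfl⟩ := hξ
    exact exists_mulVec_pow_mupper_apply_zero hp hZ ht c hη n
  obtain ⟨B₁, hB₁, h₁⟩ := first_coord i₁ lam₁ hlam₁
  obtain ⟨B₂, hB₂, h₂⟩ := first_coord i₂ lam₂ hlam₂
  obtain ⟨B, hB, h⟩ := first_coord i (lam₂ - lam₁) hdiff
  have hp0 : (p : ℝ) ≠ 0 := Nat.cast_ne_zero.mpr hp.ne_zero
  have ht0 : t ≠ 0 := by exact_mod_cast ht ▸ inv_ne_zero hρ0.ne'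
  have key : t ^ i * B = t ^ i₂ * B₂ - t ^ i₁ * B₁ := by
    rw [Pi.sub_apply, h₁, h₂] at h
    field_simp at h
    exact_mod_cast h.symm
  exact eq_min_and_le_of_pow_mul_eq_sub hpt ht0 hB hB₁ hB₂ key

/-- Lemma 4.6: with `ρ₁ = ρ₂ = ρ`, `ρ⁻¹ = t ∈ pℤ`, if `λ₁ ∈ L_{i₁}`, `λ₂ ∈ L_{i₂}` and
`λ₂ − λ₁ ∈ L_i`, then `i = min{i₁,i₂}` when `i₁ ≠ i₂`, and `i ≥ i₁` when `i₁ = i₂`. -/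
theorem stmt17 (p : ℕ) (hp : p.Prime) (ρ c : ℝ) (hρ0 : 0 < ρ) (hρ1 : ρ < 1)
    (D : Fin p → (Fin 2 → ℤ)) (hD : Function.Injective D)
    (a : Fin 2 → ℤ) (hZ : ZeroSetCond p D a)
    (t : ℤ) (ht : ρ⁻¹ = (t : ℝ)) (hpt : (p : ℤ) ∣ t)
    (L : ℕ → Set (Fin 2 → ℝ))
    (hL : ∀ i, L i = {ξ | ∃ η, mask (digitR D) η = 0 ∧ ξ = ((Mupper ρ ρ c)ᵀ ^ i).mulVec η})
    (i₁ i₂ i : ℕ) (hi₁ : 1 ≤ i₁) (hi₂ : 1 ≤ i₂) (hi : 1 ≤ i)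
    (lam₁ lam₂ : Fin 2 → ℝ) (hlam₁ : lam₁ ∈ L i₁) (hlam₂ : lam₂ ∈ L i₂)
    (hdiff : lam₂ - lam₁ ∈ L i) :
    (i₁ ≠ i₂ → i = min i₁ i₂) ∧ (i₁ = i₂ → i₁ ≤ i) :=
  stmt17_general p hp ρ c hρ0 D a hZ t ht hpt L hL i₁ i₂ i lam₁ lam₂ hlam₁ hlam₂ hdiff

end
end
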